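/- arXiv:1806.04008 — 4 statements merged into one kernel-verified Lean document; each statement's English description precedes it below -/
import Mathlib

section
/- Let X be a set, ◁ a well-quasi-order on X, and κ an infinite cardinal. Then the number of elements of X which are not κ-embeddable with respect to ◁ in X is less than κ. -/
/-- Let `X` be a set, `r` a well-quasi-order on `X` (reflexive, transitive, and every
infinite sequence contains an increasing pair), and `κ` an infinite cardinal.
Then the number of elements of `X` that are not `κ`-embeddable with respect to `r`
(i.e. that do not have at least `κ` many elements above them) is less than `κ`. -/
theorem wqo_few_non_kappa_embeddable {X : Type} (r : X → X → Prop)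
    (hrefl : Reflexive r) (htrans : Transitive r)
    (hwqo : ∀ f : ℕ → X, ∃ i j : ℕ, i < j ∧ r (f i) (f j))
    (κ : Cardinal) (hκ : Cardinal.aleph0 ≤ κ) :
    Cardinal.mk {x : X // ¬ κ ≤ Cardinal.mk {y : X // r x y}} < κ := by
  classical
  by_contra h
  rw [not_lt] at h
  -- finite unions of small up-sets are small
  have small : ∀ s : Finset X, (∀ x ∈ s, ¬ κ ≤ Cardinal.mk {y : X // r x y}) →
      Cardinal.mk {y : X // ∃ x ∈ s, r x y} < κ := by
    intro s
    induction s using Finset.induction with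
    | empty =>
      intro _
      have he : Cardinal.mk {y : X // ∃ x ∈ (∅ : Finset X), r x y} = 0 := by
        rw [Cardinal.mk_eq_zero_iff]
        constructor
        rintro ⟨y, x, hx, _⟩
        exact absurd hx (Finset.notMem_empty x)
      rw [he]
      exact lt_of_lt_of_le Cardinal.aleph0_pos hκ
    | @insert a s ha ih =>
      intro hall
      have h1 : ¬ κ ≤ Cardinal.mk {y : X // r a y} :=
        hall a (Finset.mem_insert_self a s)
      have h2 : Cardinal.mk {y : X // ∃ x ∈ s, r x y} < κ :=
        ih fun x hx => hall x (Finset.mem_insert_of_mem hx)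
      have hsub : {y : X | ∃ x ∈ insert a s, r x y} =
          {y : X | r a y} ∪ {y : X | ∃ x ∈ s, r x y} := by
        ext y
        simp [Finset.mem_insert, or_and_right, exists_or]
      calc Cardinal.mk {y : X // ∃ x ∈ insert a s, r x y}
          = Cardinal.mk ({y : X | r a y} ∪ {y : X | ∃ x ∈ s, r x y} : Set X) := by
            rw [← hsub]; rfl
        _ ≤ Cardinal.mk {y : X | r a y} + Cardinal.mk {y : X | ∃ x ∈ s, r x y} :=
            Cardinal.mk_union_le _ _
        _ < κ := Cardinal.add_lt_of_lt hκ (lt_of_not_ge h1) h2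
  -- build a bad sequence
  have hkey : ∀ s : Finset X, (∀ x ∈ s, ¬ κ ≤ Cardinal.mk {y : X // r x y}) →
      ∃ y, (¬ κ ≤ Cardinal.mk {z : X // r y z}) ∧ ∀ x ∈ s, ¬ r x y := by
    intro s hs
    by_contra hcon
    push_neg at hcon
    have hinj : Function.Injective
        (fun b : {x : X // ¬ κ ≤ Cardinal.mk {y : X // r x y}} =>
          (⟨b.1, hcon b.1 (lt_of_not_ge b.2)⟩ : {y : X // ∃ x ∈ s, r x y})) := by
      intro b1 b2 hb
      simp only [Subtype.mk.injEq] at hb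
      exact Subtype.ext hb
    have := (Cardinal.mk_le_of_injective hinj).trans_lt (small s hs)
    exact absurd h (not_le_of_gt this)
  obtain ⟨f, hfP, hf⟩ := exists_seq_of_forall_finset_exists
      (fun x : X => ¬ κ ≤ Cardinal.mk {y : X // r x y}) (fun x y => ¬ r x y) hkey
  obtain ⟨i, j, hij, hr⟩ := hwqo f
  exact hf i j hij hr
end

section
/- (Weak linking lemma) Let Γ be a graph and ε an end of Γ. Then for any families R = (R_i : i ∈ [n]) and S = (S_j : j ∈ [n]) of pairwise vertex-disjoint rays all belonging to ε, and any finite set X of vertices of Γ, there is a linkage from R to S after X. -/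
open SimpleGraph

/-- A ray in `Γ`: a one-way infinite path, given by its injective vertex sequence. -/
structure GRay {β : Type} (Γ : SimpleGraph β) where
  f : ℕ → β
  inj : Function.Injective f
  adj : ∀ n, Γ.Adj (f n) (f (n + 1))

/-- Two rays are equivalent (belong to the same end) iff there are infinitely many
pairwise vertex-disjoint paths between them. -/
def RayEquiv {β : Type} (Γ : SimpleGraph β) (R S : GRay Γ) : Prop :=
  ∃ (a b : ℕ → ℕ) (P : ∀ n : ℕ, Γ.Walk (R.f (a n)) (S.f (b n))),
    (∀ n, (P n).IsPath) ∧
    ∀ m n, m ≠ n → ∀ x, x ∈ (P m).support → x ∈ (P n).support → False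

/-- `x` lies on the tail `T(R, X)` of the ray `R` after `X`. -/
def InTail {β : Type} {Γ : SimpleGraph β} (R : GRay Γ) (X : Set β) (x : β) : Prop :=
  ∃ n, R.f n = x ∧ ∀ m, n ≤ m → R.f m ∉ X

/-- The vertex `v` dominates the end represented by `ε`: there is a ray `R` in that end
together with infinitely many `v`–`R` paths, pairwise disjoint except at `v`. -/
def Dominates {β : Type} (Γ : SimpleGraph β) (ε : GRay Γ) (v : β) : Prop :=
  ∃ R : GRay Γ, RayEquiv Γ R ε ∧
    ∃ (b : ℕ → ℕ) (P : ∀ m : ℕ, Γ.Walk v (R.f (b m))),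
      (∀ m, (P m).IsPath) ∧
      ∀ m m', m ≠ m' → ∀ x, x ∈ (P m).support → x ∈ (P m').support → x = v

/-- The data of a linkage from the family of rays `R` to the family `S`:
an injection `σ` and, for each `i`, a path `P i` from the vertex `x'_i = (R i).f (a i)`
to the vertex `y_{σ i} = (S (σ i)).f (b i)`. -/
structure Linkage {β : Type} (Γ : SimpleGraph β) {n N : ℕ}
    (R : Fin n → GRay Γ) (S : Fin N → GRay Γ) where
  σ : Fin n ↪ Fin N
  a : Fin n → ℕ
  b : Fin n → ℕ
  P : ∀ i : Fin n, Γ.Walk ((R i).f (a i)) ((S (σ i)).f (b i))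
  isPath : ∀ i, (P i).IsPath

/-- The vertex set of the ray `x_i R_i x'_i P_i y_{σ i} S_{σ i}` obtained by transitioning
from `R i` to `S (σ i)` along the linkage. -/
def Linkage.route {β : Type} {Γ : SimpleGraph β} {n N : ℕ}
    {R : Fin n → GRay Γ} {S : Fin N → GRay Γ}
    (L : Linkage Γ R S) (i : Fin n) : Set β :=
  {x | ∃ m ≤ L.a i, (R i).f m = x} ∪ {x | x ∈ (L.P i).support} ∪
    {x | ∃ m, L.b i ≤ m ∧ (S (L.σ i)).f m = x}

/-- The linkage really produces a family of pairwise disjoint rays: each path meets the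
initial segment of `R i` only in `x'_i` and the tail of `S (σ i)` only in `y_{σ i}`, the
initial segment and the tail are disjoint, and distinct routes are disjoint. -/
def Linkage.IsLinkage {β : Type} {Γ : SimpleGraph β} {n N : ℕ}
    {R : Fin n → GRay Γ} {S : Fin N → GRay Γ} (L : Linkage Γ R S) : Prop :=
  (∀ i, ∀ x ∈ (L.P i).support, (∃ m ≤ L.a i, (R i).f m = x) → x = (R i).f (L.a i)) ∧
  (∀ i, ∀ x ∈ (L.P i).support, (∃ m, L.b i ≤ m ∧ (S (L.σ i)).f m = x) →
    x = (S (L.σ i)).f (L.b i)) ∧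
  (∀ i, ∀ m ≤ L.a i, ∀ m', L.b i ≤ m' → (R i).f m ≠ (S (L.σ i)).f m') ∧
  (∀ i j, i ≠ j → Disjoint (L.route i) (L.route j))

/-- The linkage is after `X`. -/
def Linkage.After {β : Type} {Γ : SimpleGraph β} {n N : ℕ}
    {R : Fin n → GRay Γ} {S : Fin N → GRay Γ}
    (L : Linkage Γ R S) (X : Set β) : Prop :=
  ∀ i, InTail (R i) X ((R i).f (L.a i)) ∧
    (∀ x ∈ (L.P i).support, x ∉ X) ∧
    (∀ m, L.b i ≤ m → (S (L.σ i)).f m ∉ X)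

/-- The component `C(X, ε)` of `Γ - X` in which the end represented by `ε` lives. -/
def EndComp {β : Type} (Γ : SimpleGraph β) (ε : GRay Γ) (X : Set β) : Set β :=
  {w | w ∉ X ∧ ∃ (u : β) (p : Γ.Walk w u), (∀ z ∈ p.support, z ∉ X) ∧ InTail ε X u}

namespace WL


variable {V : Type} {G : SimpleGraph V}

/-- A set `Y` separates `A` from `B` in `G`: every `A`–`B` walk meets `Y`. -/
def IsSep (G : SimpleGraph V) (A B Y : Set V) : Prop :=
  ∀ ⦃a b : V⦄, a ∈ A → b ∈ B → ∀ p : G.Walk a b, ∃ y ∈ Y, y ∈ p.support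

/-- A system of `n` pairwise disjoint `A`–`B` paths. -/
structure PathSys (G : SimpleGraph V) (A B : Set V) (n : ℕ) where
  src : Fin n → V
  tgt : Fin n → V
  path : ∀ i, G.Walk (src i) (tgt i)
  hsrc : ∀ i, src i ∈ A
  htgt : ∀ i, tgt i ∈ B
  hpath : ∀ i, (path i).IsPath
  hdisj : ∀ i j, i ≠ j → ∀ x, x ∈ (path i).support → x ∈ (path j).support → False

lemma exists_firstHit {S : Set V} :
    ∀ {u v : V} (p : G.Walk u v), v ∈ S →
      ∃ (z : V) (q : G.Walk u z), z ∈ S ∧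
        (∀ x ∈ q.support, x ∈ p.support) ∧
        (∀ e ∈ q.edges, e ∈ p.edges) ∧
        (∀ x ∈ q.support, x ∈ S → x = z) ∧
        (p.IsPath → q.IsPath) := by
  intro u v p
  induction p with
  | nil =>
    intro hv
    refine ⟨_, Walk.nil, hv, by simp, by simp, ?_, fun _ => Walk.IsPath.nil⟩
    intro x hx _; simpa using hx
  | @cons u w v h p ih =>
    intro hv
    by_cases hu : u ∈ S
    · refine ⟨u, Walk.nil, hu, by simp, by simp, ?_, fun _ => Walk.IsPath.nil⟩
      intro x hx _; simpa using hx
    · obtain ⟨z, q, hz, hsup, hedg, hfst, hq⟩ := ih hv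
      refine ⟨z, Walk.cons h q, hz, ?_, ?_, ?_, ?_⟩
      · intro x hx
        rcases List.mem_cons.mp (by simpa [Walk.support_cons] using hx) with h1 | h1
        · simp [Walk.support_cons, h1]
        · simp [Walk.support_cons, hsup x h1]
      · intro e he
        rcases List.mem_cons.mp (by simpa [Walk.edges_cons] using he) with h1 | h1
        · simp [Walk.edges_cons, h1]
        · simp [Walk.edges_cons, hedg e h1]
      · intro x hx hxS
        rcases List.mem_cons.mp (by simpa [Walk.support_cons] using hx) with h1 | h1
        · exact absurd (h1 ▸ hxS) hu
        · exact hfst x h1 hxS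
      · intro hp
        rw [Walk.cons_isPath_iff] at hp
        exact (hq hp.1).cons fun hmem => hp.2 (hsup u hmem)

lemma exists_lastHit {S : Set V} {u v : V} (p : G.Walk u v) (hu : u ∈ S) :
    ∃ (z : V) (q : G.Walk z v), z ∈ S ∧
      (∀ x ∈ q.support, x ∈ p.support) ∧
      (∀ e ∈ q.edges, e ∈ p.edges) ∧
      (∀ x ∈ q.support, x ∈ S → x = z) ∧
      (p.IsPath → q.IsPath) := by
  obtain ⟨z, q, hz, hsup, hedg, hfst, hq⟩ := exists_firstHit (S := S) p.reverse hu
  refine ⟨z, q.reverse, hz, ?_, ?_, ?_, ?_⟩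
  · intro x hx
    have := hsup x (by simpa [Walk.support_reverse] using hx)
    simpa [Walk.support_reverse] using this
  · intro e he
    have := hedg e (by simpa [Walk.edges_reverse] using he)
    simpa [Walk.edges_reverse] using this
  · intro x hx hxS
    exact hfst x (by simpa [Walk.support_reverse] using hx) hxS
  · intro hp
    simpa using (hq (by simpa using hp.reverse)).reverse

lemma isPath_append_of_meet {u v w : V} {p : G.Walk u v} {q : G.Walk v w}
    (hp : p.IsPath) (hq : q.IsPath)
    (h : ∀ x, x ∈ p.support → x ∈ q.support → x = v) : (p.append q).IsPath := by
  rw [Walk.isPath_def, Walk.support_append]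
  refine List.Nodup.append hp.support_nodup (by
      have := hq.support_nodup
      rw [Walk.support_eq_cons] at this
      exact this.of_cons) ?_
  intro x hxp hxq
  have hxq' : x ∈ q.support := by
    rw [Walk.support_eq_cons]; exact List.mem_cons_of_mem _ hxq
  have hx := h x hxp hxq'
  subst hx
  have := hq.support_nodup
  rw [Walk.support_eq_cons] at this
  exact this.notMem hxq


open Classical
variable {V : Type} {G : SimpleGraph V}

/-- Contract `y` into `x`: `y` becomes isolated, its edges move to `x`. -/
def contract (G : SimpleGraph V) (x y : V) : SimpleGraph V where
  Adj a b := a ≠ b ∧ a ≠ y ∧ b ≠ y ∧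
    (G.Adj a b ∨ (a = x ∧ G.Adj y b) ∨ (b = x ∧ G.Adj a y))
  symm := by
    constructor
    rintro a b ⟨h1, h2, h3, h4⟩
    refine ⟨h1.symm, h3, h2, ?_⟩
    rcases h4 with h | ⟨ha, hb⟩ | ⟨hb, ha⟩
    · exact Or.inl h.symm
    · exact Or.inr (Or.inr ⟨ha, hb.symm⟩)
    · exact Or.inr (Or.inl ⟨hb, ha.symm⟩)
  loopless := ⟨fun a h => h.1 rfl⟩

/-- vertex projection sending `y` to `x`. -/
noncomputable def proj (x y z : V) : V := if z = y then x else z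

lemma proj_eq_self {x y z : V} (h : z ≠ y) : proj x y z = z := by
  simp [proj, h]

lemma contract_adj_y {a b x y : V} (h : (contract G x y).Adj a b) : a ≠ y ∧ b ≠ y :=
  ⟨h.2.1, h.2.2.1⟩

lemma contract_case {a b x y : V} (h : (contract G x y).Adj a b) (hn : ¬ G.Adj a b) :
    (a = x ∧ G.Adj y b ∧ b ≠ x ∧ b ≠ y) ∨ (b = x ∧ G.Adj a y ∧ a ≠ x ∧ a ≠ y) := by
  obtain ⟨h1, h2, h3, h4⟩ := h
  rcases h4 with h | ⟨ha, hb⟩ | ⟨hb, ha⟩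
  · exact absurd h hn
  · exact Or.inl ⟨ha, hb, fun hbx => h1 (ha.trans hbx.symm), h3⟩
  · exact Or.inr ⟨hb, ha, fun hax => h1 (hax.trans hb.symm), h2⟩

/-- edge-repair map for the counting argument: replace `x` by `y`. -/
noncomputable def rho (x y z : V) : V := if z = x then y else z

lemma contract_edge_cases {x y : V} (hxy : G.Adj x y) {e : Sym2 V}
    (he : e ∈ (contract G x y).edgeSet) :
    (e ∈ G.edgeSet ∧ ∀ z ∈ e, z ≠ y) ∨
    (∃ c, c ≠ x ∧ c ≠ y ∧ e = s(x, c) ∧ G.Adj y c) := by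
  induction e with
  | _ a b =>
    rw [mem_edgeSet] at he
    by_cases hn : G.Adj a b
    · refine Or.inl ⟨hn, ?_⟩
      intro z hz
      rcases Sym2.mem_iff.mp hz with rfl | rfl
      · exact he.2.1
      · exact he.2.2.1
    · rcases contract_case he hn with ⟨rfl, hyb, hbx, hby⟩ | ⟨rfl, hay, hax, hay'⟩
      · exact Or.inr ⟨b, hbx, hby, rfl, hyb⟩
      · exact Or.inr ⟨a, hax, hay', Sym2.eq_swap, hay.symm⟩

lemma contract_edgeSet_lt {x y : V} (hxy : G.Adj x y) (hG : G.edgeSet.Finite) :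
    (contract G x y).edgeSet.Finite ∧
      (contract G x y).edgeSet.ncard < G.edgeSet.ncard := by
  classical
  set F : Sym2 V → Sym2 V := fun e => if e ∈ G.edgeSet then e else e.map (rho x y) with hF
  have key : ∀ e ∈ (contract G x y).edgeSet,
      F e ∈ G.edgeSet \ {s(x, y)} ∧
      ((e ∈ G.edgeSet ∧ F e = e ∧ ∀ z ∈ e, z ≠ y) ∨
       (∃ c, c ≠ x ∧ c ≠ y ∧ e = s(x, c) ∧ F e = s(y, c))) := by
    intro e he
    rcases contract_edge_cases hxy he with ⟨hG1, hy⟩ | ⟨c, hcx, hcy, rfl, hyc⟩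
    · refine ⟨⟨by simp [hF, hG1], ?_⟩, Or.inl ⟨hG1, by simp [hF, hG1], hy⟩⟩
      · intro hcon
        simp only [Set.mem_singleton_iff] at hcon
        have : y ∈ e := by
          simp only [hF, if_pos hG1] at hcon
          rw [hcon]; simp
        exact hy y this rfl
    · have hnot : s(x, c) ∉ G.edgeSet → True := fun _ => trivial
      by_cases hxc : s(x, c) ∈ G.edgeSet
      · refine ⟨⟨by simp [hF, hxc], ?_⟩, Or.inl ⟨hxc, by simp [hF, hxc], ?_⟩⟩
        · intro hcon
          simp only [hF, Set.mem_singleton_iff, if_pos hxc] at hcon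
          rcases Sym2.eq_iff.mp hcon with ⟨h1, h2⟩ | ⟨h1, h2⟩
          · exact hcy h2
          · exact hcx h2
        · intro z hz
          rcases Sym2.mem_iff.mp hz with rfl | rfl
          · exact hxy.ne
          · exact hcy
      · have hmap : F s(x, c) = s(y, c) := by
          have h1 : rho x y x = y := by simp [rho]
          have h2 : rho x y c = c := by simp [rho, hcx]
          simp only [hF, if_neg hxc, Sym2.map_pair_eq, h1, h2]
        refine ⟨⟨?_, ?_⟩, Or.inr ⟨c, hcx, hcy, rfl, hmap⟩⟩
        · rw [hmap, mem_edgeSet]; exact hyc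
        · rw [hmap]
          intro hcon
          simp only [Set.mem_singleton_iff] at hcon
          rcases Sym2.eq_iff.mp hcon with ⟨h1, h2⟩ | ⟨h1, h2⟩
          · exact hxy.ne h1.symm
          · exact hcx h2
  have hmapsto : ∀ e ∈ (contract G x y).edgeSet, F e ∈ G.edgeSet \ {s(x, y)} :=
    fun e he => (key e he).1
  have hinj : Set.InjOn F (contract G x y).edgeSet := by
    intro e1 h1 e2 h2 heq
    rcases (key e1 h1).2 with ⟨hg1, hf1, hy1⟩ | ⟨c1, hc1x, hc1y, rfl, hf1⟩ <;>
      rcases (key e2 h2).2 with ⟨hg2, hf2, hy2⟩ | ⟨c2, hc2x, hc2y, rfl, hf2⟩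
    · rw [hf1, hf2] at heq; exact heq
    · exfalso
      rw [hf1, hf2] at heq
      have : y ∈ e1 := by rw [heq]; simp
      exact hy1 y this rfl
    · exfalso
      rw [hf1, hf2] at heq
      have : y ∈ e2 := by rw [← heq]; simp
      exact hy2 y this rfl
    · rw [hf1, hf2] at heq
      rcases Sym2.eq_iff.mp heq with ⟨-, h2⟩ | ⟨h1, h2⟩
      · rw [h2]
      · exact absurd h2 hc1y
  have hxyG : s(x, y) ∈ G.edgeSet := hxy
  have hfin2 : (G.edgeSet \ {s(x, y)}).Finite := hG.subset Set.diff_subset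
  have himg : (F '' (contract G x y).edgeSet).Finite :=
    hfin2.subset (Set.image_subset_iff.mpr hmapsto)
  have hfin1 : (contract G x y).edgeSet.Finite := (himg.of_finite_image hinj)
  refine ⟨hfin1, lt_of_le_of_lt (Set.ncard_le_ncard_of_injOn F hmapsto hinj hfin2) ?_⟩
  have : (G.edgeSet \ {s(x, y)}).ncard = G.edgeSet.ncard - 1 :=
    Set.ncard_diff_singleton_of_mem hxyG
  rw [this]
  have hpos : 0 < G.edgeSet.ncard := by
    rw [Set.ncard_pos hG]; exact ⟨_, hxyG⟩
  omega

lemma contract_adj_proj {x y : V} (hxy : G.Adj x y) {a b : V} (h : G.Adj a b) :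
    proj x y a = proj x y b ∨ (contract G x y).Adj (proj x y a) (proj x y b) := by
  have hpy : proj x y y = x := by simp [proj]
  by_cases ha : a = y <;> by_cases hb : b = y
  · exact absurd (ha.trans hb.symm) h.ne
  · subst ha
    rw [hpy, proj_eq_self hb]
    by_cases hbx : b = x
    · exact Or.inl hbx.symm
    · exact Or.inr ⟨fun hc => hbx hc.symm, hxy.ne, hb, Or.inr (Or.inl ⟨rfl, h⟩)⟩
  · subst hb
    rw [hpy, proj_eq_self ha]
    by_cases hax : a = x
    · exact Or.inl hax
    · exact Or.inr ⟨hax, ha, hxy.ne, Or.inr (Or.inr ⟨rfl, h⟩)⟩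
  · rw [proj_eq_self ha, proj_eq_self hb]
    exact Or.inr ⟨h.ne, ha, hb, Or.inl h⟩

lemma exists_projWalk {x y : V} (hxy : G.Adj x y) {u v : V} (p : G.Walk u v) :
    ∃ q : (contract G x y).Walk (proj x y u) (proj x y v),
      ∀ z ∈ q.support, ∃ w ∈ p.support, proj x y w = z := by
  induction p with
  | nil => exact ⟨Walk.nil, by simp⟩
  | @cons a b c h p ih =>
    obtain ⟨q, hq⟩ := ih
    by_cases h' : proj x y a = proj x y b
    · refine ⟨q.copy h'.symm rfl, ?_⟩
      intro z hz
      obtain ⟨w, hw, hww⟩ := hq z (by simpa [Walk.support_copy] using hz)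
      exact ⟨w, by simp [hw], hww⟩
    · refine ⟨Walk.cons ((contract_adj_proj hxy h).resolve_left h') q, ?_⟩
      intro z hz
      rcases List.mem_cons.mp (by simpa [Walk.support_cons] using hz) with h1 | h1
      · exact ⟨a, by simp, h1.symm⟩
      · obtain ⟨w, hw, hww⟩ := hq z h1
        exact ⟨w, by simp [hw], hww⟩

lemma exists_gadget {x y : V} (hxy : G.Adj x y) {a b : V} (h : (contract G x y).Adj a b) :
    ∃ w : G.Walk a b, ∀ z ∈ w.support, z = a ∨ z = b ∨ (z = y ∧ (a = x ∨ b = x)) := by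
  by_cases hn : G.Adj a b
  · exact ⟨Walk.cons hn Walk.nil, by intro z hz; simpa using
      (by simpa [Walk.support_cons] using hz : z = a ∨ z = b ∨ False).imp id (Or.imp id False.elim)⟩
  · rcases contract_case h hn with ⟨rfl, hyb, -, -⟩ | ⟨rfl, hay, -, -⟩
    · refine ⟨Walk.cons hxy (Walk.cons hyb Walk.nil), ?_⟩
      intro z hz
      simp only [Walk.support_cons, Walk.support_nil, List.mem_cons,
        List.not_mem_nil, or_false, List.mem_singleton] at hz
      rcases hz with rfl | rfl | rfl
      · exact Or.inl rfl
      · exact Or.inr (Or.inr ⟨rfl, Or.inl rfl⟩)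
      · exact Or.inr (Or.inl rfl)
    · refine ⟨Walk.cons hay (Walk.cons hxy.symm Walk.nil), ?_⟩
      intro z hz
      simp only [Walk.support_cons, Walk.support_nil, List.mem_cons,
        List.not_mem_nil, or_false, List.mem_singleton] at hz
      rcases hz with rfl | rfl | rfl
      · exact Or.inl rfl
      · exact Or.inr (Or.inr ⟨rfl, Or.inr rfl⟩)
      · exact Or.inr (Or.inl rfl)

lemma exists_expand {x y : V} (hxy : G.Adj x y) {u v : V}
    (p : (contract G x y).Walk u v) :
    ∃ w : G.Walk u v, ∀ z ∈ w.support, z ∈ p.support ∨ (z = y ∧ x ∈ p.support) := by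
  induction p with
  | nil => exact ⟨Walk.nil, by simp⟩
  | @cons a b c h p ih =>
    obtain ⟨w, hw⟩ := ih
    obtain ⟨g, hg⟩ := exists_gadget hxy h
    refine ⟨g.append w, ?_⟩
    intro z hz
    rcases (Walk.mem_support_append_iff _ _).mp hz with h1 | h1
    · rcases hg z h1 with rfl | rfl | ⟨rfl, hx⟩
      · exact Or.inl (by simp)
      · exact Or.inl (by simp [Walk.start_mem_support])
      · rcases hx with rfl | rfl
        · exact Or.inr ⟨rfl, by simp⟩
        · exact Or.inr ⟨rfl, by simp [Walk.start_mem_support]⟩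
    · rcases hw z h1 with h2 | ⟨rfl, hx⟩
      · exact Or.inl (by simp [h2])
      · exact Or.inr ⟨rfl, by simp [hx]⟩


lemma proj_y {x y : V} : proj x y y = x := by simp [proj]

lemma mem_of_eq {α : Type*} {l : List α} {a b : α} (h : a = b) (ha : a ∈ l) : b ∈ l :=
  h ▸ ha

lemma walk_no_edges (hE : G.edgeSet = ∅) {u v : V} (p : G.Walk u v) :
    u = v ∧ p.support = [u] := by
  cases p with
  | nil => exact ⟨rfl, rfl⟩
  | cons h p => exact absurd (G.mem_edgeSet.mpr h) (by simp [hE])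

lemma exists_inj_in (C : Set V) (n : ℕ) (h : C.Finite → n ≤ C.ncard) :
    ∃ f : Fin n → V, Function.Injective f ∧ ∀ i, f i ∈ C := by
  have hex : ∃ t : Finset V, ↑t ⊆ C ∧ t.card = n := by
    by_cases hC : C.Finite
    · obtain ⟨t, ht, hcard⟩ := Finset.exists_subset_card_eq (n := n) (s := hC.toFinset)
        (by have := h hC; rwa [Set.ncard_eq_toFinset_card _ hC] at this)
      refine ⟨t, ?_, hcard⟩
      intro z hz
      have := ht hz
      simpa using this
    · obtain ⟨t, htC, htfin, htcard⟩ := Set.Infinite.exists_subset_ncard_eq hC n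
      exact ⟨htfin.toFinset, by simpa using htC,
        by rwa [Set.ncard_eq_toFinset_card _ htfin] at htcard⟩
  obtain ⟨t, htC, hcard⟩ := hex
  refine ⟨fun i => ((Finset.equivFinOfCardEq hcard).symm i : V), ?_, ?_⟩
  · intro i j hij
    exact (Finset.equivFinOfCardEq hcard).symm.injective (Subtype.coe_injective hij)
  · intro i
    exact htC (Finset.mem_coe.mpr ((Finset.equivFinOfCardEq hcard).symm i).2)

lemma menger_edgeless {A B : Set V} {n : ℕ} (hE : G.edgeSet = ∅)
    (hsep : ∀ Y : Finset V, IsSep G A B ↑Y → n ≤ Y.card) :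
    Nonempty (PathSys G A B n) := by
  have hpick : ∃ f : Fin n → V, Function.Injective f ∧ ∀ i, f i ∈ A ∩ B := by
    apply exists_inj_in
    intro hfin
    have : IsSep G A B ↑hfin.toFinset := by
      intro a b ha hb p
      obtain ⟨rfl, hsup⟩ := walk_no_edges hE p
      exact ⟨a, by simp [hfin.mem_toFinset]; exact ⟨ha, hb⟩, by simp [hsup]⟩
    have := hsep hfin.toFinset this
    rwa [Set.ncard_eq_toFinset_card _ hfin]
  obtain ⟨f, hfinj, hfm⟩ := hpick
  exact ⟨{
    src := f, tgt := f, path := fun i => Walk.nil,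
    hsrc := fun i => (hfm i).1, htgt := fun i => (hfm i).2,
    hpath := fun i => Walk.IsPath.nil,
    hdisj := by
      intro i j hij z hzi hzj
      simp only [Walk.support_nil, List.mem_singleton] at hzi hzj
      exact hij (hfinj (hzi ▸ hzj ▸ rfl)) }⟩

lemma y_not_mem_contract_walk {x y u v : V} (hu : u ≠ y)
    (p : (contract G x y).Walk u v) : y ∉ p.support := by
  induction p with
  | nil => simpa using fun h => hu h.symm
  | @cons a b c h p ih =>
    intro hmem
    rcases List.mem_cons.mp (by simpa using hmem) with h1 | h1
    · exact hu h1.symm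
    · exact ih h.2.2.1 h1

lemma sep_of_contract_sep {x y : V} (hxy : G.Adj x y) {A B Z : Set V}
    (hZ : IsSep (contract G x y) (proj x y '' A) (proj x y '' B) Z) :
    IsSep G A B (Z ∪ {y}) ∧ (x ∉ Z → IsSep G A B Z) := by
  constructor
  · intro a b ha hb p
    obtain ⟨q, hq⟩ := exists_projWalk hxy p
    obtain ⟨z, hzZ, hzq⟩ := hZ (Set.mem_image_of_mem _ ha) (Set.mem_image_of_mem _ hb) q
    obtain ⟨w, hwp, hwz⟩ := hq z hzq
    by_cases hwy : w = y
    · exact ⟨y, Or.inr rfl, hwy ▸ hwp⟩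
    · have : w = z := by rw [← hwz, proj_eq_self hwy]
      exact ⟨z, Or.inl hzZ, this ▸ hwp⟩
  · intro hx a b ha hb p
    obtain ⟨q, hq⟩ := exists_projWalk hxy p
    obtain ⟨z, hzZ, hzq⟩ := hZ (Set.mem_image_of_mem _ ha) (Set.mem_image_of_mem _ hb) q
    obtain ⟨w, hwp, hwz⟩ := hq z hzq
    by_cases hwy : w = y
    · exfalso
      rw [hwy, proj_y] at hwz
      exact hx (hwz ▸ hzZ)
    · have : w = z := by rw [← hwz, proj_eq_self hwy]
      exact ⟨z, hzZ, this ▸ hwp⟩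

lemma expand_sys {x y : V} (hxy : G.Adj x y) {A B : Set V} {n : ℕ}
    (sys : PathSys (contract G x y) (proj x y '' A) (proj x y '' B) n) :
    Nonempty (PathSys G A B n) := by
  have hxny : x ≠ y := hxy.ne
  have key : ∀ i, ∃ (a b : V) (w : G.Walk a b), a ∈ A ∧ b ∈ B ∧
      ∀ z ∈ w.support, z ∈ (sys.path i).support ∨ (z = y ∧ x ∈ (sys.path i).support) := by
    intro i
    obtain ⟨w, hw⟩ := exists_expand hxy (sys.path i)
    obtain ⟨a0, ha0, ha0e⟩ := sys.hsrc i
    obtain ⟨b0, hb0, hb0e⟩ := sys.htgt i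
    -- fix the start
    have hstart : ∃ w₁ : G.Walk a0 (sys.tgt i),
        ∀ z ∈ w₁.support, z ∈ (sys.path i).support ∨ (z = y ∧ x ∈ (sys.path i).support) := by
      by_cases hay : a0 = y
      · have hsx : sys.src i = x := by rw [← ha0e, hay, proj_y]
        have hadj : G.Adj a0 x := by rw [hay]; exact hxy.symm
        refine ⟨Walk.cons hadj (w.copy hsx rfl), ?_⟩
        intro z hz
        rcases List.mem_cons.mp (by simpa [Walk.support_cons, Walk.support_copy] using hz)
          with h1 | h1
        · right
          exact ⟨h1.trans hay, mem_of_eq hsx (Walk.start_mem_support (sys.path i))⟩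
        · exact hw z (by simpa [Walk.support_copy] using h1)
      · have hsx : sys.src i = a0 := by rw [← ha0e, proj_eq_self hay]
        exact ⟨w.copy hsx rfl, fun z hz => hw z (by simpa [Walk.support_copy] using hz)⟩
    obtain ⟨w₁, hw₁⟩ := hstart
    by_cases hby : b0 = y
    · have htx : sys.tgt i = x := by rw [← hb0e, hby, proj_y]
      refine ⟨a0, b0, (w₁.copy rfl htx).append
        ((Walk.cons hxy Walk.nil).copy rfl hby.symm), ha0, hb0, ?_⟩
      intro z hz
      rcases (Walk.mem_support_append_iff _ _).mp hz with h1 | h1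
      · exact hw₁ z (by simpa [Walk.support_copy] using h1)
      · rcases (by simpa [Walk.support_copy] using h1 : z = x ∨ z = y) with h2 | h2
        · left
          rw [h2]
          exact mem_of_eq htx (Walk.end_mem_support (sys.path i))
        · exact Or.inr ⟨h2, mem_of_eq htx (Walk.end_mem_support (sys.path i))⟩
    · have htx : sys.tgt i = b0 := by rw [← hb0e, proj_eq_self hby]
      exact ⟨a0, b0, w₁.copy rfl htx, ha0, hb0,
        fun z hz => hw₁ z (by simpa [Walk.support_copy] using hz)⟩
  choose a b w ha hb hwsup using key
  refine ⟨{
    src := a, tgt := b, path := fun i => (w i).toPath,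
    hsrc := ha, htgt := hb,
    hpath := fun i => (w i).toPath.2,
    hdisj := ?_ }⟩
  intro i j hij z hzi hzj
  have hzi' := hwsup i z (Walk.support_toPath_subset _ hzi)
  have hzj' := hwsup j z (Walk.support_toPath_subset _ hzj)
  have hynotin : ∀ k, y ∉ (sys.path k).support := by
    intro k
    apply y_not_mem_contract_walk
    intro hc
    obtain ⟨c0, hc0, hc0e⟩ := sys.hsrc k
    by_cases hcy : c0 = y
    · rw [hcy, proj_y] at hc0e
      exact hxny (hc0e.trans hc)
    · rw [proj_eq_self hcy] at hc0e
      exact hcy (hc0e.trans hc)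
  rcases hzi' with h1 | ⟨rfl, hx1⟩
  · rcases hzj' with h2 | ⟨rfl, hx2⟩
    · exact sys.hdisj i j hij z h1 h2
    · exact hynotin i h1
  · rcases hzj' with h2 | ⟨-, hx2⟩
    · exact hynotin j h2
    · exact sys.hdisj i j hij x hx1 hx2

lemma end_not_mem_takeUntil {u v w : V} {p : G.Walk u v} (hp : p.IsPath)
    (hw : w ∈ p.support) (hne : w ≠ v) : v ∉ (p.takeUntil w hw).support := by
  intro hv
  have hnodup := hp.support_nodup
  rw [← p.take_spec hw, Walk.support_append] at hnodup
  rcases List.nodup_append'.mp hnodup with ⟨-, -, hdisj⟩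
  have hv2 : v ∈ (p.dropUntil w hw).support := Walk.end_mem_support _
  rw [Walk.support_eq_cons] at hv2
  rcases List.mem_cons.mp hv2 with h1 | h1
  · exact hne h1.symm
  · exact hdisj hv h1

lemma start_not_mem_dropUntil {u v w : V} {p : G.Walk u v} (hp : p.IsPath)
    (hw : w ∈ p.support) (hne : w ≠ u) : u ∉ (p.dropUntil w hw).support := by
  intro hu
  have hnodup := hp.support_nodup
  rw [← p.take_spec hw, Walk.support_append] at hnodup
  rcases List.nodup_append'.mp hnodup with ⟨-, -, hdisj⟩
  rw [Walk.support_eq_cons] at hu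
  rcases List.mem_cons.mp hu with h1 | h1
  · exact hne h1.symm
  · exact hdisj (Walk.start_mem_support _) h1

theorem menger_aux : ∀ (N : ℕ) (G : SimpleGraph V) (A B : Set V) (n : ℕ),
    G.edgeSet.Finite → G.edgeSet.ncard ≤ N →
    (∀ Y : Finset V, IsSep G A B ↑Y → n ≤ Y.card) →
    Nonempty (PathSys G A B n) := by
  intro N
  induction N with
  | zero =>
    intro G A B n hfin hcard hsep
    have hE : G.edgeSet = ∅ := by
      have : G.edgeSet.ncard = 0 := Nat.le_zero.mp hcard
      exact (Set.ncard_eq_zero hfin).mp this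
    exact menger_edgeless hE hsep
  | succ N ih =>
    intro G A B n hfin hcard hsep
    by_cases hE : G.edgeSet = ∅
    · exact menger_edgeless hE hsep
    · obtain ⟨e, he⟩ := Set.nonempty_iff_ne_empty.mpr hE
      induction e using Sym2.ind with
      | _ x y =>
      have hxy : G.Adj x y := G.mem_edgeSet.mp he
      by_cases hα : ∀ Z : Finset V,
          IsSep (contract G x y) (proj x y '' A) (proj x y '' B) ↑Z → n ≤ Z.card
      · obtain ⟨hfin', hlt⟩ := contract_edgeSet_lt hxy hfin
        obtain ⟨sys⟩ := ih (contract G x y) (proj x y '' A) (proj x y '' B) n hfin'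
          (by omega) hα
        exact expand_sys hxy sys
      · push_neg at hα
        obtain ⟨Zt, hZsep, hZcard⟩ := hα
        have hxZ : x ∈ Zt := by
          by_contra hx
          have := (sep_of_contract_sep hxy hZsep).2 (by simpa using hx)
          have := hsep Zt this
          omega
        set S : Finset V := insert y Zt with hS
        have hSsep : IsSep G A B ↑S := by
          have h1 := (sep_of_contract_sep hxy hZsep).1
          intro a b ha hb p
          obtain ⟨z, hz, hzs⟩ := h1 ha hb p
          refine ⟨z, ?_, hzs⟩
          rcases hz with h | h
          · simp [hS]; right; exact_mod_cast h
          · simp [hS]; left; simpa using h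
        have hScard : S.card = n := by
          have h1 := hsep S hSsep
          have h2 : S.card ≤ Zt.card + 1 := Finset.card_insert_le _ _
          omega
        set G' := G.deleteEdges {s(x, y)} with hG'
        have hG'le : ∀ {u v : V} (q : G'.Walk u v), ∀ e' ∈ q.edges, e' ∈ G.edgeSet := by
          intro u v q e' he'
          have := q.edges_subset_edgeSet he'
          rw [hG', edgeSet_deleteEdges] at this
          exact this.1
        have hG'fin : G'.edgeSet.Finite := by
          rw [hG', edgeSet_deleteEdges]; exact hfin.diff
        have hG'card : G'.edgeSet.ncard ≤ N := by
          rw [hG', edgeSet_deleteEdges]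
          have h1 : (G.edgeSet \ {s(x, y)}).ncard = G.edgeSet.ncard - 1 :=
            Set.ncard_diff_singleton_of_mem he
          have h2 : 0 < G.edgeSet.ncard := by
            rw [Set.ncard_pos hfin]; exact ⟨_, he⟩
          omega
        have hxS : x ∈ (↑S : Set V) := by simp [hS]; right; exact hxZ
        have hyS : y ∈ (↑S : Set V) := by simp [hS]
        -- first IH hypothesis
        have hyp1 : ∀ Z : Finset V, IsSep G' A ↑S ↑Z → n ≤ Z.card := by
          intro Z hZ
          apply hsep
          intro a b ha hb p
          obtain ⟨s₀, hs₀S, hs₀p⟩ := hSsep ha hb p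
          have hs₀S' : s₀ ∈ (↑S : Set V) := hs₀S
          obtain ⟨z, q, hzS, hsup, hedg, hfst, -⟩ :=
            exists_firstHit (S := (↑S : Set V)) (p.takeUntil s₀ hs₀p) hs₀S'
          have hefree : ∀ e' ∈ q.edges, e' ∈ G'.edgeSet := by
            intro e' he'
            rw [hG', edgeSet_deleteEdges]
            refine ⟨q.edges_subset_edgeSet he', ?_⟩
            intro hc
            rw [Set.mem_singleton_iff] at hc
            subst hc
            have hx1 : x ∈ q.support := q.fst_mem_support_of_mem_edges he'
            have hy1 : y ∈ q.support := q.snd_mem_support_of_mem_edges he'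
            exact hxy.ne ((hfst x hx1 hxS).trans (hfst y hy1 hyS).symm)
          obtain ⟨w', hwZ, hws⟩ := hZ ha hzS (q.transfer G' hefree)
          rw [Walk.support_transfer] at hws
          exact ⟨w', hwZ, (p.support_takeUntil_subset hs₀p) (hsup w' hws)⟩
        have hyp2 : ∀ Z : Finset V, IsSep G' ↑S B ↑Z → n ≤ Z.card := by
          intro Z hZ
          apply hsep
          intro a b ha hb p
          obtain ⟨s₀, hs₀S, hs₀p⟩ := hSsep ha hb p
          have hs₀S' : s₀ ∈ (↑S : Set V) := hs₀S
          obtain ⟨z, q, hzS, hsup, hedg, hfst, -⟩ :=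
            exists_lastHit (S := (↑S : Set V)) (p.dropUntil s₀ hs₀p) hs₀S'
          have hefree : ∀ e' ∈ q.edges, e' ∈ G'.edgeSet := by
            intro e' he'
            rw [hG', edgeSet_deleteEdges]
            refine ⟨q.edges_subset_edgeSet he', ?_⟩
            intro hc
            rw [Set.mem_singleton_iff] at hc
            subst hc
            have hx1 : x ∈ q.support := q.fst_mem_support_of_mem_edges he'
            have hy1 : y ∈ q.support := q.snd_mem_support_of_mem_edges he'
            exact hxy.ne ((hfst x hx1 hxS).trans (hfst y hy1 hyS).symm)
          obtain ⟨w', hwZ, hws⟩ := hZ hzS hb (q.transfer G' hefree)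
          rw [Walk.support_transfer] at hws
          exact ⟨w', hwZ, (p.support_dropUntil_subset hs₀p) (hsup w' hws)⟩
        obtain ⟨sys1⟩ := ih G' A ↑S n hG'fin hG'card hyp1
        obtain ⟨sys2⟩ := ih G' ↑S B n hG'fin hG'card hyp2
        -- trim
        have trim1 : ∀ i, ∃ (z : V) (q : G'.Walk (sys1.src i) z), z ∈ (↑S : Set V) ∧
            (∀ x' ∈ q.support, x' ∈ (sys1.path i).support) ∧
            (∀ x' ∈ q.support, x' ∈ (↑S : Set V) → x' = z) ∧ q.IsPath := by
          intro i
          obtain ⟨z, q, h1, h2, -, h4, h5⟩ :=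
            exists_firstHit (S := (↑S : Set V)) (sys1.path i) (sys1.htgt i)
          exact ⟨z, q, h1, h2, h4, h5 (sys1.hpath i)⟩
        have trim2 : ∀ j, ∃ (z : V) (q : G'.Walk z (sys2.tgt j)), z ∈ (↑S : Set V) ∧
            (∀ x' ∈ q.support, x' ∈ (sys2.path j).support) ∧
            (∀ x' ∈ q.support, x' ∈ (↑S : Set V) → x' = z) ∧ q.IsPath := by
          intro j
          obtain ⟨z, q, h1, h2, -, h4, h5⟩ :=
            exists_lastHit (S := (↑S : Set V)) (sys2.path j) (sys2.hsrc j)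
          exact ⟨z, q, h1, h2, h4, h5 (sys2.hpath j)⟩
        choose g1 q1 hg1S hq1sub hq1fst hq1path using trim1
        choose g2 q2 hg2S hq2sub hq2fst hq2path using trim2
        have hg1inj : Function.Injective g1 := by
          intro i j hij
          by_contra hne
          exact sys1.hdisj i j hne (g1 i) (hq1sub i _ (Walk.end_mem_support _))
            (hij ▸ hq1sub j _ (Walk.end_mem_support _))
        have hg2inj : Function.Injective g2 := by
          intro i j hij
          by_contra hne
          exact sys2.hdisj i j hne (g2 i) (hq2sub i _ (Walk.start_mem_support _))
            (hij ▸ hq2sub j _ (Walk.start_mem_support _))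
        have himg : Finset.image g2 Finset.univ = S := by
          apply Finset.eq_of_subset_of_card_le
          · intro z hz
            obtain ⟨j, -, rfl⟩ := Finset.mem_image.mp hz
            exact_mod_cast hg2S j
          · rw [Finset.card_image_of_injective _ hg2inj, Finset.card_univ,
              Fintype.card_fin, hScard]
        have hmatch : ∀ i, ∃ j, g2 j = g1 i := by
          intro i
          have : g1 i ∈ Finset.image g2 Finset.univ := by
            rw [himg]; exact_mod_cast hg1S i
          obtain ⟨j, -, hj⟩ := Finset.mem_image.mp this
          exact ⟨j, hj⟩
        choose π hπ using hmatch
        have hπinj : Function.Injective π := by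
          intro i j hij
          apply hg1inj
          rw [← hπ i, ← hπ j, hij]
        -- crossing lemma
        have cross : ∀ i j (w' : V), w' ∈ (q1 i).support → w' ∈ (q2 j).support →
            w' = g1 i ∧ w' = g2 j := by
          intro i j w' hw1 hw2
          by_cases hwS : w' ∈ (↑S : Set V)
          · exact ⟨hq1fst i w' hw1 hwS, hq2fst j w' hw2 hwS⟩
          · exfalso
            have hne1 : w' ≠ g1 i := fun hc => hwS (hc ▸ hg1S i)
            have hne2 : w' ≠ g2 j := fun hc => hwS (hc ▸ hg2S j)
            have htS : ∀ z ∈ ((q1 i).takeUntil w' hw1).support, z ∉ (↑S : Set V) := by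
              intro z hz hzS
              have hz' := (Walk.support_takeUntil_subset _ _) hz
              have hzg : z = g1 i := hq1fst i z hz' hzS
              rw [hzg] at hz
              exact end_not_mem_takeUntil (hq1path i) hw1 hne1 hz
            have hdS : ∀ z ∈ ((q2 j).dropUntil w' hw2).support, z ∉ (↑S : Set V) := by
              intro z hz hzS
              have hz' := (Walk.support_dropUntil_subset _ _) hz
              have hzg : z = g2 j := hq2fst j z hz' hzS
              rw [hzg] at hz
              exact start_not_mem_dropUntil (hq2path j) hw2 hne2 hz
            set cw := (((q1 i).takeUntil w' hw1).append ((q2 j).dropUntil w' hw2))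
              with hcw
            obtain ⟨z, hzS, hzsup⟩ := hSsep (sys1.hsrc i) (sys2.htgt j)
              (cw.transfer G (fun e' he' => by
                rcases (Walk.edges_append _ _) ▸ he' with h
                rcases List.mem_append.mp h with h1 | h1
                · exact hG'le _ _ ((Walk.edges_takeUntil_subset _ _) h1)
                · exact hG'le _ _ ((Walk.edges_dropUntil_subset _ _) h1)))
            rw [Walk.support_transfer] at hzsup
            rcases (Walk.mem_support_append_iff _ _).mp hzsup with h1 | h1
            · exact htS z h1 hzS
            · exact hdS z h1 hzS
        -- glue
        have hcopy : ∀ i, (q2 (π i)).copy (hπ i) rfl |>.IsPath := by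
          intro i
          have := hq2path (π i)
          simpa using this
        refine ⟨{
          src := fun i => sys1.src i,
          tgt := fun i => sys2.tgt (π i),
          path := fun i => ((q1 i).append ((q2 (π i)).copy (hπ i) rfl)).transfer G
            (fun e' he' => by
              rcases List.mem_append.mp ((Walk.edges_append _ _) ▸ he') with h1 | h1
              · exact hG'le _ _ h1
              · exact hG'le _ _ (by simpa using h1)),
          hsrc := fun i => sys1.hsrc i,
          htgt := fun i => sys2.htgt (π i),
          hpath := ?_, hdisj := ?_ }⟩
        · intro i
          apply Walk.IsPath.transfer
          apply isPath_append_of_meet (hq1path i) (hcopy i)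
          intro z hz1 hz2
          exact (cross i (π i) z hz1 (by simpa using hz2)).1
        · intro i j hij z hzi hzj
          rw [Walk.support_transfer] at hzi hzj
          have hzi' := (Walk.mem_support_append_iff _ _).mp hzi
          have hzj' := (Walk.mem_support_append_iff _ _).mp hzj
          simp only [Walk.support_copy] at hzi' hzj'
          rcases hzi' with h1 | h1 <;> rcases hzj' with h2 | h2
          · exact sys1.hdisj i j hij z (hq1sub i z h1) (hq1sub j z h2)
          · have hc := cross i (π j) z h1 h2
            have heq : g1 i = g1 j := by rw [← hc.1, hc.2, hπ j]
            exact hij (hg1inj heq)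
          · have hc := cross j (π i) z h2 h1
            have : g1 j = g1 i := by rw [← hc.1, hc.2, hπ i]
            exact hij (hg1inj this.symm)
          · have hne : π i ≠ π j := fun hc => hij (hπinj hc)
            exact sys2.hdisj (π i) (π j) hne z (hq2sub (π i) z h1) (hq2sub (π j) z h2)

theorem menger (G : SimpleGraph V) (A B : Set V) (n : ℕ)
    (hfin : G.edgeSet.Finite)
    (hsep : ∀ Y : Finset V, IsSep G A B ↑Y → n ≤ Y.card) :
    Nonempty (PathSys G A B n) :=
  menger_aux G.edgeSet.ncard G A B n hfin le_rfl hsep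


variable {β : Type} {Γ : SimpleGraph β}

/-- Walk along a ray from index `a`, of length `k`. -/
def rayWalk (g : GRay Γ) (a : ℕ) : (k : ℕ) → Γ.Walk (g.f a) (g.f (a + k))
  | 0 => Walk.nil
  | k+1 => Walk.concat (rayWalk g a k) (g.adj (a + k))

lemma rayWalk_support (g : GRay Γ) (a k : ℕ) (z : β) :
    z ∈ (rayWalk g a k).support ↔ ∃ m, a ≤ m ∧ m ≤ a + k ∧ g.f m = z := by
  induction k with
  | zero =>
    simp only [rayWalk, Walk.support_nil, List.mem_singleton]
    constructor
    · rintro rfl; exact ⟨a, le_rfl, by omega, rfl⟩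
    · rintro ⟨m, h1, h2, rfl⟩
      have : m = a := by omega
      rw [this]
  | succ k ih =>
    rw [rayWalk, Walk.support_concat, List.mem_append]
    simp only [List.mem_singleton]
    constructor
    · rintro (h | rfl)
      · obtain ⟨m, h1, h2, h3⟩ := ih.mp h
        exact ⟨m, h1, by omega, h3⟩
      · exact ⟨a + (k + 1), by omega, by omega, rfl⟩
    · rintro ⟨m, h1, h2, rfl⟩
      by_cases hm : m ≤ a + k
      · exact Or.inl (ih.mpr ⟨m, h1, hm, rfl⟩)
      · have : m = a + (k + 1) := by omega
        rw [this]; exact Or.inr rfl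

lemma rayWalk_edges (g : GRay Γ) (a k : ℕ) (e : Sym2 β) :
    e ∈ (rayWalk g a k).edges ↔ ∃ m, a ≤ m ∧ m + 1 ≤ a + k ∧ e = s(g.f m, g.f (m+1)) := by
  induction k with
  | zero =>
    simp only [rayWalk, Walk.edges_nil, List.not_mem_nil, false_iff]
    rintro ⟨m, h1, h2, -⟩; omega
  | succ k ih =>
    rw [rayWalk, Walk.edges_concat, List.concat_eq_append, List.mem_append]
    simp only [List.mem_singleton]
    constructor
    · rintro (h | rfl)
      · obtain ⟨m, h1, h2, h3⟩ := ih.mp h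
        exact ⟨m, h1, by omega, h3⟩
      · exact ⟨a + k, by omega, by omega, rfl⟩
    · rintro ⟨m, h1, h2, rfl⟩
      by_cases hm : m + 1 ≤ a + k
      · exact Or.inl (ih.mpr ⟨m, h1, hm, rfl⟩)
      · have : m = a + k := by omega
        rw [this]; exact Or.inr rfl

/-- Walk along a ray between two indices `p ≤ q`. -/
def raySeg (g : GRay Γ) (p q : ℕ) (h : p ≤ q) : Γ.Walk (g.f p) (g.f q) :=
  (rayWalk g p (q - p)).copy rfl (by rw [Nat.add_sub_cancel' h])

lemma raySeg_support (g : GRay Γ) {p q : ℕ} (h : p ≤ q) (z : β) :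
    z ∈ (raySeg g p q h).support ↔ ∃ m, p ≤ m ∧ m ≤ q ∧ g.f m = z := by
  rw [raySeg, Walk.support_copy, rayWalk_support]
  constructor <;> rintro ⟨m, h1, h2, h3⟩ <;> exact ⟨m, h1, by omega, h3⟩

lemma raySeg_edges (g : GRay Γ) {p q : ℕ} (h : p ≤ q) (e : Sym2 β) :
    e ∈ (raySeg g p q h).edges ↔ ∃ m, p ≤ m ∧ m + 1 ≤ q ∧ e = s(g.f m, g.f (m+1)) := by
  rw [raySeg, Walk.edges_copy, rayWalk_edges]
  constructor <;> rintro ⟨m, h1, h2, h3⟩ <;> exact ⟨m, h1, by omega, h3⟩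

lemma hits_finite (g : GRay Γ) {W : Set β} (hW : W.Finite) :
    {m : ℕ | g.f m ∈ W}.Finite := by
  have : {m : ℕ | g.f m ∈ W} = g.f ⁻¹' W := rfl
  rw [this]
  exact Set.Finite.preimage (Set.injOn_of_injective g.inj) hW

/-- A bound beyond which a ray avoids a finite set. -/
lemma exists_hit_bound (g : GRay Γ) {W : Set β} (hW : W.Finite) :
    ∃ B, ∀ m, g.f m ∈ W → m < B := by
  obtain ⟨B0, hB0⟩ := (hits_finite g hW).bddAbove
  exact ⟨B0 + 1, fun m hm => Nat.lt_succ_of_le (hB0 hm)⟩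

lemma mem_support_of_mem_edges {u v : β} (p : Γ.Walk u v) {e : Sym2 β} {z : β}
    (he : e ∈ p.edges) (hz : z ∈ e) : z ∈ p.support := by
  induction e with
  | _ a b =>
    rcases Sym2.mem_iff.mp hz with rfl | rfl
    · exact p.fst_mem_support_of_mem_edges he
    · exact p.snd_mem_support_of_mem_edges he

/-- Select a member of an infinite disjoint path family avoiding a finite set,
with lower bounds on both endpoint indices. -/
lemma family_select {g ε : GRay Γ} (h : RayEquiv Γ g ε) {W : Set β} (hW : W.Finite)
    (c1 c2 : ℕ) :
    ∃ (a b : ℕ) (p : Γ.Walk (g.f a) (ε.f b)), c1 ≤ a ∧ c2 ≤ b ∧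
      ∀ z ∈ p.support, z ∉ W := by
  obtain ⟨af, bf, P, hP, hdisj⟩ := h
  have bad1 : {k : ℕ | ∃ z ∈ W, z ∈ (P k).support}.Finite := by
    refine Set.Finite.subset (Set.Finite.biUnion hW
      (fun z _ => ?_)) (fun k ⟨z, hz1, hz2⟩ => Set.mem_biUnion hz1 hz2)
    apply Set.Subsingleton.finite
    intro k1 h1 k2 h2
    by_contra hne
    exact hdisj k1 k2 hne z h1 h2
  have hafinj : Function.Injective af := by
    intro k1 k2 he
    by_contra hne
    refine hdisj k1 k2 hne (g.f (af k1)) (Walk.start_mem_support _) ?_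
    rw [he]; exact Walk.start_mem_support _
  have hbfinj : Function.Injective bf := by
    intro k1 k2 he
    by_contra hne
    refine hdisj k1 k2 hne (ε.f (bf k1)) (Walk.end_mem_support _) ?_
    rw [he]; exact Walk.end_mem_support _
  have bad2 : {k : ℕ | af k < c1}.Finite := by
    have : {k : ℕ | af k < c1} = af ⁻¹' (Set.Iio c1) := rfl
    rw [this]
    exact Set.Finite.preimage (Set.injOn_of_injective hafinj) (Set.finite_Iio c1)
  have bad3 : {k : ℕ | bf k < c2}.Finite := by
    have : {k : ℕ | bf k < c2} = bf ⁻¹' (Set.Iio c2) := rfl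
    rw [this]
    exact Set.Finite.preimage (Set.injOn_of_injective hbfinj) (Set.finite_Iio c2)
  obtain ⟨k, hk⟩ := ((bad1.union bad2).union bad3).infinite_compl.nonempty
  simp only [Set.mem_compl_iff, Set.mem_union, Set.mem_setOf_eq, not_or, not_lt,
    not_exists, not_and] at hk
  exact ⟨af k, bf k, P k, hk.1.2, hk.2, fun z hz hzW => hk.1.1 z hzW hz⟩

/-- A vertex on a walk in `fromEdgeSet E` is the start or lies on an edge of `E`. -/
lemma fromEdgeSet_walk_support {E : Set (Sym2 β)} {u v : β}
    (p : (SimpleGraph.fromEdgeSet E).Walk u v) :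
    ∀ z ∈ p.support, z = u ∨ ∃ e ∈ E, z ∈ e := by
  induction p with
  | nil => intro z hz; exact Or.inl (by simpa using hz)
  | @cons a b c h p ih =>
    intro z hz
    rcases List.mem_cons.mp (by simpa using hz) with h1 | h1
    · exact Or.inl h1
    · rcases ih z h1 with h2 | h2
      · right
        refine ⟨s(a, b), ?_, by rw [h2]; simp⟩
        exact ((SimpleGraph.fromEdgeSet_adj _).mp h).1
      · exact Or.inr h2



lemma raySeg₂ (g : GRay Γ) (p q : ℕ) :
    ∃ wk : Γ.Walk (g.f p) (g.f q),
      (∀ z ∈ wk.support, ∃ m, min p q ≤ m ∧ m ≤ max p q ∧ g.f m = z) ∧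
      (∀ e ∈ wk.edges, ∃ m, min p q ≤ m ∧ m + 1 ≤ max p q ∧ e = s(g.f m, g.f (m+1))) := by
  rcases le_total p q with h | h
  · refine ⟨raySeg g p q h, ?_, ?_⟩
    · intro z hz
      obtain ⟨m, h1, h2, h3⟩ := (raySeg_support g h z).mp hz
      exact ⟨m, by omega, by omega, h3⟩
    · intro e he
      obtain ⟨m, h1, h2, h3⟩ := (raySeg_edges g h e).mp he
      exact ⟨m, by omega, by omega, h3⟩
  · refine ⟨(raySeg g q p h).reverse, ?_, ?_⟩
    · intro z hz
      rw [Walk.support_reverse, List.mem_reverse] at hz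
      obtain ⟨m, h1, h2, h3⟩ := (raySeg_support g h z).mp hz
      exact ⟨m, by omega, by omega, h3⟩
    · intro e he
      rw [Walk.edges_reverse, List.mem_reverse] at he
      obtain ⟨m, h1, h2, h3⟩ := (raySeg_edges g h e).mp he
      exact ⟨m, by omega, by omega, h3⟩

/-- Sequential choice of `K` pairwise disjoint bridges to `ε`, avoiding a finite set,
with prescribed foot lower bounds and strictly escalating `ε`-hits. -/
lemma pieces_exist (ε : GRay Γ) (des : ℕ → GRay Γ) (heq : ∀ k, RayEquiv Γ (des k) ε)
    (lb : ℕ → ℕ) (W0 : Set β) (hW0 : W0.Finite) (M0 : ℕ) (K : ℕ) :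
    ∃ (ft ef : ℕ → ℕ) (w : ℕ → Σ' (u : β) (v : β), Γ.Walk u v),
      (∀ k < K, (w k).1 = (des k).f (ft k)) ∧
      (∀ k < K, (w k).2.1 = ε.f (ef k)) ∧
      (∀ k < K, lb k ≤ ft k) ∧
      (∀ k < K, ∀ z ∈ (w k).2.2.support, z ∉ W0) ∧
      (∀ k < K, ∀ k' < K, k ≠ k' →
        ∀ z, z ∈ (w k).2.2.support → z ∈ (w k').2.2.support → False) ∧
      (∀ k < K, ∀ m, ε.f m ∈ (w k).2.2.support → M0 < m) ∧
      (∀ k < K, ∀ k' < K, k < k' → ∀ m m', ε.f m ∈ (w k).2.2.support →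
        ε.f m' ∈ (w k').2.2.support → m < m') := by
  induction K with
  | zero =>
    exact ⟨fun _ => 0, fun _ => 0, fun _ => ⟨ε.f 0, ε.f 0, Walk.nil⟩,
      fun k hk => absurd hk (by omega), fun k hk => absurd hk (by omega),
      fun k hk => absurd hk (by omega), fun k hk => absurd hk (by omega),
      fun k hk => absurd hk (by omega), fun k hk => absurd hk (by omega),
      fun k hk => absurd hk (by omega)⟩
  | succ K ih =>
    obtain ⟨ft, ef, w, h1, h2, h3, h4, h5, h6, h7⟩ := ih
    set BIG : Set β := W0 ∪ ⋃ k ∈ Set.Iio K, {z | z ∈ (w k).2.2.support} with hBIG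
    have hBIGfin : BIG.Finite := by
      refine hW0.union ((Set.finite_Iio K).biUnion (fun k _ => ?_))
      exact (w k).2.2.support.finite_toSet
    obtain ⟨Bd, hBd⟩ := exists_hit_bound ε hBIGfin
    set Bd' := max Bd (M0 + 1) with hBd'
    obtain ⟨aK, bK, pK, haK, hbK, hpavoid⟩ := family_select (heq K)
      (hBIGfin.union ((Set.finite_Iio Bd').image ε.f)) (lb K) 0
    refine ⟨Function.update ft K aK, Function.update ef K bK,
      Function.update w K ⟨(des K).f aK, ε.f bK, pK⟩, ?_, ?_, ?_, ?_, ?_, ?_, ?_⟩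
    · intro k hk
      rcases Nat.lt_succ_iff_lt_or_eq.mp hk with h | rfl
      · rw [Function.update_of_ne (by omega), Function.update_of_ne (by omega)]
        exact h1 k h
      · rw [Function.update_self, Function.update_self]
    · intro k hk
      rcases Nat.lt_succ_iff_lt_or_eq.mp hk with h | rfl
      · rw [Function.update_of_ne (by omega), Function.update_of_ne (by omega)]
        exact h2 k h
      · rw [Function.update_self, Function.update_self]
    · intro k hk
      rcases Nat.lt_succ_iff_lt_or_eq.mp hk with h | rfl
      · rw [Function.update_of_ne (by omega)]
        exact h3 k h
      · rw [Function.update_self]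
        exact haK
    · intro k hk
      rcases Nat.lt_succ_iff_lt_or_eq.mp hk with h | rfl
      · rw [Function.update_of_ne (by omega)]
        exact h4 k h
      · rw [Function.update_self]
        intro z hz hzW
        exact hpavoid z hz (Or.inl (Or.inl hzW))
    · intro k hk k' hk' hne z hzk hzk'
      rcases Nat.lt_succ_iff_lt_or_eq.mp hk with h | rfl <;>
        rcases Nat.lt_succ_iff_lt_or_eq.mp hk' with h' | rfl
      · rw [Function.update_of_ne (by omega)] at hzk
        rw [Function.update_of_ne (by omega)] at hzk'
        exact h5 k h k' h' hne z hzk hzk'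
      · rw [Function.update_of_ne (by omega)] at hzk
        rw [Function.update_self] at hzk'
        refine hpavoid z hzk' (Or.inl (Or.inr ?_))
        exact Set.mem_biUnion (Set.mem_Iio.mpr h) hzk
      · rw [Function.update_self] at hzk
        rw [Function.update_of_ne (by omega)] at hzk'
        refine hpavoid z hzk (Or.inl (Or.inr ?_))
        exact Set.mem_biUnion (Set.mem_Iio.mpr h') hzk'
      · exact hne rfl
    · intro k hk m hm
      rcases Nat.lt_succ_iff_lt_or_eq.mp hk with h | rfl
      · rw [Function.update_of_ne (by omega)] at hm
        exact h6 k h m hm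
      · rw [Function.update_self] at hm
        by_contra hc
        push_neg at hc
        refine hpavoid _ hm (Or.inr ?_)
        exact Set.mem_image_of_mem ε.f (Set.mem_Iio.mpr (by omega))
    · intro k hk k' hk' hlt m m' hm hm'
      rcases Nat.lt_succ_iff_lt_or_eq.mp hk with h | rfl <;>
        rcases Nat.lt_succ_iff_lt_or_eq.mp hk' with h' | rfl
      · rw [Function.update_of_ne (by omega)] at hm
        rw [Function.update_of_ne (by omega)] at hm'
        exact h7 k h k' h' hlt m m' hm hm'
      · rw [Function.update_of_ne (by omega)] at hm
        rw [Function.update_self] at hm'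
        -- m is a hit of an old piece (< Bd), m' a hit of the new one (≥ Bd')
        have hmBd : m < Bd := by
          refine hBd m (Or.inr ?_)
          exact Set.mem_biUnion (Set.mem_Iio.mpr h) hm
        have hm'Bd : Bd' ≤ m' := by
          by_contra hc
          push_neg at hc
          refine hpavoid _ hm' (Or.inr ?_)
          exact Set.mem_image_of_mem ε.f (Set.mem_Iio.mpr hc)
        omega
      · omega
      · omega


end WL

open WL in
theorem weak_linking_lemma' {β : Type} (Γ : SimpleGraph β) (ε : GRay Γ) (n : ℕ)
    (R S : Fin n → GRay Γ)
    (hRε : ∀ i, RayEquiv Γ (R i) ε) (hSε : ∀ j, RayEquiv Γ (S j) ε)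
    (hRdisj : ∀ i j, i ≠ j →
      ∀ x, x ∈ Set.range (R i).f → x ∈ Set.range (R j).f → False)
    (hSdisj : ∀ i j, i ≠ j →
      ∀ x, x ∈ Set.range (S i).f → x ∈ Set.range (S j).f → False)
    (X : Set β) (hX : X.Finite) :
    ∃ L : Linkage Γ R S, L.IsLinkage ∧ L.After X := by
  classical
  -- §1 thresholds
  have hTex : ∀ i, ∃ T, ∀ m, T ≤ m → (R i).f m ∉ X := by
    intro i
    obtain ⟨B, hB⟩ := exists_hit_bound (R i) hX
    exact ⟨B, fun m hm hmem => by have := hB m hmem; omega⟩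
  choose T hT using hTex
  set x : Fin n → β := fun i => (R i).f (T i) with hxdef
  set HeadSet : Set β := ⋃ i, (R i).f '' Set.Iic (T i) with hHead
  have hHeadFin : HeadSet.Finite := Set.finite_iUnion fun i => (Set.finite_Iic _).image _
  have hmemHead : ∀ i m, m ≤ T i → (R i).f m ∈ HeadSet := fun i m hm =>
    Set.mem_iUnion.mpr ⟨i, ⟨m, Set.mem_Iic.mpr hm, rfl⟩⟩
  have hxHead : ∀ i, x i ∈ HeadSet := fun i => hmemHead i (T i) le_rfl
  set W0 : Set β := X ∪ HeadSet with hW0def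
  have hW0Fin : W0.Finite := hX.union hHeadFin
  have hFex : ∀ j, ∃ F, ∀ m, F ≤ m → (S j).f m ∉ W0 := by
    intro j
    obtain ⟨B, hB⟩ := exists_hit_bound (S j) hW0Fin
    exact ⟨B, fun m hm hmem => by have := hB m hmem; omega⟩
  choose F hF using hFex
  obtain ⟨M0, hM0⟩ := exists_hit_bound ε hW0Fin
  -- §2 designations and pieces
  set des : ℕ → GRay Γ := fun k =>
    if h : k % (2 * n) < n then R ⟨k % (2 * n), h⟩
    else if h2 : k % (2 * n) - n < n then S ⟨k % (2 * n) - n, h2⟩ else ε with hdes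
  set lb : ℕ → ℕ := fun k =>
    if h : k % (2 * n) < n then T ⟨k % (2 * n), h⟩ + 1
    else if h2 : k % (2 * n) - n < n then F ⟨k % (2 * n) - n, h2⟩ else 0 with hlb
  have hdeseq : ∀ k, RayEquiv Γ (des k) ε := by
    intro k
    rw [hdes]
    dsimp only
    split_ifs with h h2
    · exact hRε _
    · exact hSε _
    · exact ⟨id, id, fun m => Walk.nil, fun m => Walk.IsPath.nil, by
        intro m m' hne z hz hz'
        simp only [Walk.support_nil, List.mem_singleton] at hz hz'
        exact hne (ε.inj (hz ▸ hz' ▸ rfl))⟩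
  set K := 2 * n * n with hK
  obtain ⟨ft, ef, w, hw1, hw2, hw3, hw4, hw5, hw6, hw7⟩ :=
    pieces_exist ε des hdeseq lb W0 hW0Fin M0 K
  -- §3 index bookkeeping
  set iR : Fin n → Fin n → ℕ := fun t i => 2 * n * t.val + i.val with hiRdef
  set iS : Fin n → Fin n → ℕ := fun t j => 2 * n * t.val + n + j.val with hiSdef
  have hlayer : ∀ (t : Fin n) (r : ℕ), r < 2 * n → 2 * n * t.val + r < K := by
    intro t r hr
    have h1 : t.val + 1 ≤ n := t.isLt
    calc 2 * n * t.val + r < 2 * n * t.val + 2 * n := by omega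
    _ = 2 * n * (t.val + 1) := by ring
    _ ≤ 2 * n * n := Nat.mul_le_mul_left _ h1
    _ = K := hK.symm
  have hiRK : ∀ t i : Fin n, iR t i < K := fun t i =>
    hlayer t i.val (by have := i.isLt; omega)
  have hiSK : ∀ t j : Fin n, iS t j < K := by
    intro t j
    have h := hlayer t (n + j.val) (by have := j.isLt; omega)
    rw [hiSdef]
    dsimp only
    omega
  have hmod : ∀ (t : Fin n) (r : ℕ), r < 2 * n → (2 * n * t.val + r) % (2 * n) = r := by
    intro t r hr
    rw [Nat.mul_add_mod]
    exact Nat.mod_eq_of_lt hr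
  have hmodR : ∀ t i : Fin n, (iR t i) % (2 * n) = i.val := fun t i =>
    hmod t i.val (by have := i.isLt; omega)
  have hmodS : ∀ t j : Fin n, (iS t j) % (2 * n) = n + j.val := by
    intro t j
    have h := hmod t (n + j.val) (by have := j.isLt; omega)
    rw [hiSdef]
    dsimp only
    rw [Nat.add_assoc]
    exact h
  have hdesR : ∀ t i : Fin n, des (iR t i) = R i := by
    intro t i
    have h1 : (iR t i) % (2 * n) = i.val := hmodR t i
    rw [hdes]
    dsimp only
    rw [dif_pos (show (iR t i) % (2 * n) < n by rw [h1]; exact i.isLt)]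
    congr 1
    exact Fin.ext h1
  have hdesS : ∀ t j : Fin n, des (iS t j) = S j := by
    intro t j
    have h1 : (iS t j) % (2 * n) = n + j.val := hmodS t j
    rw [hdes]
    dsimp only
    rw [dif_neg (show ¬ (iS t j) % (2 * n) < n by rw [h1]; omega)]
    rw [dif_pos (show (iS t j) % (2 * n) - n < n by rw [h1]; have := j.isLt; omega)]
    congr 1
    refine Fin.ext ?_
    show (iS t j) % (2 * n) - n = j.val
    rw [h1]; omega
  have hlbR : ∀ t i : Fin n, lb (iR t i) = T i + 1 := by
    intro t i
    have h1 : (iR t i) % (2 * n) = i.val := hmodR t i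
    rw [hlb]
    dsimp only
    rw [dif_pos (show (iR t i) % (2 * n) < n by rw [h1]; exact i.isLt)]
    congr 2
    exact Fin.ext h1
  have hlbS : ∀ t j : Fin n, lb (iS t j) = F j := by
    intro t j
    have h1 : (iS t j) % (2 * n) = n + j.val := hmodS t j
    rw [hlb]
    dsimp only
    rw [dif_neg (show ¬ (iS t j) % (2 * n) < n by rw [h1]; omega)]
    rw [dif_pos (show (iS t j) % (2 * n) - n < n by rw [h1]; have := j.isLt; omega)]
    congr 1
    refine Fin.ext ?_
    show (iS t j) % (2 * n) - n = j.val
    rw [h1]; omega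
  -- §4 typed pieces and bounds
  have heR1 : ∀ t i : Fin n, (w (iR t i)).1 = (R i).f (ft (iR t i)) := fun t i => by
    rw [hw1 _ (hiRK t i), hdesR t i]
  have heR2 : ∀ t i : Fin n, (w (iR t i)).2.1 = ε.f (ef (iR t i)) := fun t i =>
    hw2 _ (hiRK t i)
  have heS1 : ∀ t j : Fin n, (w (iS t j)).1 = (S j).f (ft (iS t j)) := fun t j => by
    rw [hw1 _ (hiSK t j), hdesS t j]
  have heS2 : ∀ t j : Fin n, (w (iS t j)).2.1 = ε.f (ef (iS t j)) := fun t j =>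
    hw2 _ (hiSK t j)
  have hftR : ∀ t i : Fin n, T i + 1 ≤ ft (iR t i) := fun t i => by
    have h := hw3 _ (hiRK t i); rwa [hlbR t i] at h
  have hftS : ∀ t j : Fin n, F j ≤ ft (iS t j) := fun t j => by
    have h := hw3 _ (hiSK t j); rwa [hlbS t j] at h
  have hhit : ∀ k, k < K → ε.f (ef k) ∈ (w k).2.2.support := fun k hk =>
    mem_of_eq (hw2 k hk) (Walk.end_mem_support _)
  have hefmono : ∀ k k', k < k' → k' < K → ef k < ef k' := fun k k' h hk' =>
    hw7 k (h.trans hk') k' hk' h _ _ (hhit k (h.trans hk')) (hhit k' hk')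
  have hefmono' : ∀ k k', k ≤ k' → k' < K → ef k ≤ ef k' := by
    intro k k' h hk'
    rcases eq_or_lt_of_le h with rfl | h
    · exact le_rfl
    · exact le_of_lt (hefmono k k' h hk')
  -- §5 segments
  set RTop : Fin n → ℕ := fun i => Finset.univ.sup (fun t : Fin n => ft (iR t i))
    with hRTopdef
  have hRTop' : ∀ t i : Fin n, ft (iR t i) ≤ RTop i := by
    intro t i
    rw [hRTopdef]
    exact Finset.le_sup (f := fun t : Fin n => ft (iR t i)) (Finset.mem_univ t)
  have hRTop : ∀ i, T i ≤ RTop i := fun i => by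
    have h1 := hRTop' i i
    have h2 := hftR i i
    omega
  set Rseg : ∀ i : Fin n, Γ.Walk ((R i).f (T i)) ((R i).f (RTop i)) :=
    fun i => raySeg (R i) (T i) (RTop i) (hRTop i) with hRsegdef
  set lo : Fin n → ℕ := fun t => ef (2 * n * t.val) with hlodef
  set hi : Fin n → ℕ := fun t => ef (2 * n * t.val + (2 * n - 1)) with hhidef
  have hfirstK : ∀ t : Fin n, 2 * n * t.val < K := fun t =>
    by have := hlayer t 0 (by have := t.pos; omega); omega
  have hlastK : ∀ t : Fin n, 2 * n * t.val + (2 * n - 1) < K := fun t =>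
    hlayer t (2 * n - 1) (by have := t.pos; omega)
  have hlohi : ∀ t, lo t ≤ hi t := fun t =>
    hefmono' _ _ (by omega) (hlastK t)
  set Eseg : ∀ t : Fin n, Γ.Walk (ε.f (lo t)) (ε.f (hi t)) :=
    fun t => raySeg ε (lo t) (hi t) (hlohi t) with hEsegdef
  have heRlo : ∀ t i : Fin n, lo t ≤ ef (iR t i) := fun t i =>
    hefmono' _ _ (by rw [hiRdef]; dsimp only; omega) (hiRK t i)
  have heRhi : ∀ t i : Fin n, ef (iR t i) ≤ hi t := fun t i =>
    hefmono' _ _ (by rw [hiRdef]; dsimp only; have := i.isLt; omega) (hlastK t)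
  have heSlo : ∀ t j : Fin n, lo t ≤ ef (iS t j) := fun t j =>
    hefmono' _ _ (by rw [hiSdef]; dsimp only; omega) (hiSK t j)
  have heShi : ∀ t j : Fin n, ef (iS t j) ≤ hi t := fun t j =>
    hefmono' _ _ (by rw [hiSdef]; dsimp only; have := j.isLt; omega) (hlastK t)
  -- §6 tails
  set AV0 : Set β := (⋃ k ∈ Set.Iio K, {z | z ∈ (w k).2.2.support}) ∪
    (⋃ i, {z | z ∈ (Rseg i).support}) ∪ (⋃ t, {z | z ∈ (Eseg t).support}) with hAV0def
  have hAV0fin : AV0.Finite := by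
    refine (Set.Finite.union (Set.Finite.union ?_ ?_) ?_)
    · exact (Set.finite_Iio K).biUnion fun k _ => (w k).2.2.support.finite_toSet
    · exact Set.finite_iUnion fun i => (Rseg i).support.finite_toSet
    · exact Set.finite_iUnion fun t => (Eseg t).support.finite_toSet
  have hLex : ∀ j, ∃ Lj, F j ≤ Lj ∧ ∀ m, (S j).f m ∈ AV0 → m < Lj := by
    intro j
    obtain ⟨B, hB⟩ := exists_hit_bound (S j) hAV0fin
    exact ⟨max (F j) B, le_max_left _ _,
      fun m hm => lt_of_lt_of_le (hB m hm) (le_max_right _ _)⟩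
  choose L hLF hLb using hLex
  set Sseg : ∀ j : Fin n, Γ.Walk ((S j).f (F j)) ((S j).f (L j)) :=
    fun j => raySeg (S j) (F j) (L j) (hLF j) with hSsegdef
  set top : Fin n → β := fun j => (S j).f (L j) with htopdef
  set AV : Set β := AV0 ∪ ⋃ j, {z | z ∈ (Sseg j).support} with hAVdef
  -- §7 the finite graph
  set E : Set (Sym2 β) := ((⋃ k ∈ Set.Iio K, {e | e ∈ (w k).2.2.edges}) ∪
    (⋃ i, {e | e ∈ (Rseg i).edges}) ∪ (⋃ t, {e | e ∈ (Eseg t).edges})) ∪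
    (⋃ j, {e | e ∈ (Sseg j).edges}) with hEdef
  have hEfin : E.Finite := by
    refine Set.Finite.union (Set.Finite.union (Set.Finite.union ?_ ?_) ?_) ?_
    · exact (Set.finite_Iio K).biUnion fun k _ => (w k).2.2.edges.finite_toSet
    · exact Set.finite_iUnion fun i => (Rseg i).edges.finite_toSet
    · exact Set.finite_iUnion fun t => (Eseg t).edges.finite_toSet
    · exact Set.finite_iUnion fun j => (Sseg j).edges.finite_toSet
  have hEsub : ∀ e ∈ E, e ∈ Γ.edgeSet := by
    intro e he
    rcases he with ((h | h) | h) | h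
    · obtain ⟨k, -, hk⟩ := Set.mem_iUnion₂.mp h
      exact (w k).2.2.edges_subset_edgeSet hk
    · obtain ⟨i, hk⟩ := Set.mem_iUnion.mp h
      exact (Rseg i).edges_subset_edgeSet hk
    · obtain ⟨t, hk⟩ := Set.mem_iUnion.mp h
      exact (Eseg t).edges_subset_edgeSet hk
    · obtain ⟨j, hk⟩ := Set.mem_iUnion.mp h
      exact (Sseg j).edges_subset_edgeSet hk
  set G' := SimpleGraph.fromEdgeSet E with hG'def
  have hG'fin : G'.edgeSet.Finite := by
    rw [hG'def, edgeSet_fromEdgeSet]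
    exact hEfin.diff
  have hintoG' : ∀ {u v : β} (p : Γ.Walk u v), (∀ e ∈ p.edges, e ∈ E) →
      ∀ e ∈ p.edges, e ∈ G'.edgeSet := by
    intro u v p hp e he
    rw [hG'def, edgeSet_fromEdgeSet]
    exact ⟨hp e he, Γ.not_isDiag_of_mem_edgeSet (p.edges_subset_edgeSet he)⟩
  have houtG' : ∀ {u v : β} (p : G'.Walk u v), ∀ e ∈ p.edges, e ∈ Γ.edgeSet := by
    intro u v p e he
    have h := p.edges_subset_edgeSet he
    rw [hG'def, edgeSet_fromEdgeSet] at h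
    exact hEsub e h.1
  -- §8 A, B
  set A : Set β := Set.range x with hAdef
  set B : Set β := Set.range top with hBdef
  have hxinj : Function.Injective x := by
    intro i i' h
    by_contra hne
    exact hRdisj i i' hne (x i) ⟨T i, rfl⟩ ⟨T i', h.symm⟩
  have htopinj : Function.Injective top := by
    intro j j' h
    by_contra hne
    exact hSdisj j j' hne (top j) ⟨L j, rfl⟩ ⟨L j', h.symm⟩
  have hsep : ∀ Y : Finset β, IsSep G' A B ↑Y → n ≤ Y.card := by
    intro Y hY
    by_contra hltc
    push_neg at hltc
    -- generic counting
    have hcount : ∀ (P : Fin n → β → Prop),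
        (∀ i i' z, i ≠ i' → P i z → P i' z → False) →
        (Finset.univ.filter (fun i => ∃ z ∈ Y, P i z)).card ≤ Y.card := by
      intro P hP
      refine Finset.card_le_card_of_injOn
        (fun i => if h : ∃ z ∈ Y, P i z then h.choose else ε.f 0) ?_ ?_
      · intro i hi
        rw [Finset.mem_coe, Finset.mem_filter] at hi
        dsimp only
        rw [dif_pos hi.2]
        exact hi.2.choose_spec.1
      · intro i hi i' hi' heq
        rw [Finset.mem_coe, Finset.mem_filter] at hi hi'
        dsimp only at heq
        rw [dif_pos hi.2, dif_pos hi'.2] at heq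
        by_contra hne
        exact hP i i' _ hne hi.2.choose_spec.2 (heq ▸ hi'.2.choose_spec.2)
    have hfree : ∀ (P : Fin n → β → Prop),
        (∀ i i' z, i ≠ i' → P i z → P i' z → False) →
        ∃ i : Fin n, ∀ z ∈ Y, ¬ P i z := by
      intro P hP
      have h1 := hcount P hP
      by_contra hc
      push_neg at hc
      have h2 : Finset.univ.filter (fun i => ∃ z ∈ Y, P i z) = Finset.univ := by
        apply Finset.eq_univ_iff_forall.mpr
        intro i
        obtain ⟨z, hz, hPz⟩ := hc i
        exact Finset.mem_filter.mpr ⟨Finset.mem_univ i, ⟨z, hz, hPz⟩⟩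
      rw [h2, Finset.card_univ, Fintype.card_fin] at h1
      omega
    -- free source ray
    obtain ⟨i₀, hi₀⟩ := hfree (fun i z => z ∈ (Rseg i).support) (by
      intro i i' z hne h1 h2
      obtain ⟨m, -, -, h3⟩ := (raySeg_support _ _ _).mp h1
      obtain ⟨m', -, -, h3'⟩ := (raySeg_support _ _ _).mp h2
      exact hRdisj i i' hne z ⟨m, h3⟩ ⟨m', h3'⟩)
    obtain ⟨j₀, hj₀⟩ := hfree (fun j z => z ∈ (Sseg j).support) (by
      intro j j' z hne h1 h2
      obtain ⟨m, -, -, h3⟩ := (raySeg_support _ _ _).mp h1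
      obtain ⟨m', -, -, h3'⟩ := (raySeg_support _ _ _).mp h2
      exact hSdisj j j' hne z ⟨m, h3⟩ ⟨m', h3'⟩)
    -- layer territories
    have hkey : ∀ t t' : Fin n, t.val < t'.val →
        2 * n * t.val + (2 * n - 1) < 2 * n * t'.val := by
      intro t t' h
      have h2 : 2 * n * (t.val + 1) ≤ 2 * n * t'.val := Nat.mul_le_mul_left _ (by omega)
      have h3 : 2 * n * (t.val + 1) = 2 * n * t.val + 2 * n := by ring
      have hn : 0 < n := t.pos
      omega
    have hEsegIdx : ∀ (t : Fin n) z, z ∈ (Eseg t).support →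
        ∃ m, lo t ≤ m ∧ m ≤ hi t ∧ ε.f m = z := fun t z hz => (raySeg_support _ _ _).mp hz
    have hTerr : ∀ t t' : Fin n, t.val < t'.val → ∀ z,
        ((∃ r, r < 2 * n ∧ z ∈ (w (2 * n * t.val + r)).2.2.support) ∨
          z ∈ (Eseg t).support) →
        ((∃ r, r < 2 * n ∧ z ∈ (w (2 * n * t'.val + r)).2.2.support) ∨
          z ∈ (Eseg t').support) → False := by
      intro t t' hlt z h h'
      rcases h with ⟨r, hr, hz⟩ | hz <;> rcases h' with ⟨r', hr', hz'⟩ | hz'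
      · have hkk : 2 * n * t.val + r < 2 * n * t'.val + r' := by
          have := hkey t t' hlt; omega
        exact hw5 _ (hlayer t r hr) _ (hlayer t' r' hr') (by omega) z hz hz'
      · obtain ⟨m, h1, h2, h3⟩ := hEsegIdx t' z hz'
        have hzm : ε.f m ∈ (w (2 * n * t.val + r)).2.2.support := by rw [h3]; exact hz
        have hfk : 2 * n * t.val + r < 2 * n * t'.val := by have := hkey t t' hlt; omega
        have hcon := hw7 _ (hlayer t r hr) _ (hfirstK t') hfk m (lo t') hzm
          (hhit _ (hfirstK t'))
        omega
      · obtain ⟨m, h1, h2, h3⟩ := hEsegIdx t z hz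
        have hzm : ε.f m ∈ (w (2 * n * t'.val + r')).2.2.support := by rw [h3]; exact hz'
        have hfk : 2 * n * t.val + (2 * n - 1) < 2 * n * t'.val + r' := by
          have := hkey t t' hlt; omega
        have hcon := hw7 _ (hlastK t) _ (hlayer t' r' hr') hfk (hi t) m
          (hhit _ (hlastK t)) hzm
        omega
      · obtain ⟨m, h1, h2, h3⟩ := hEsegIdx t z hz
        obtain ⟨m', h1', h2', h3'⟩ := hEsegIdx t' z hz'
        have hmm : m = m' := ε.inj (by rw [h3, h3'])
        have hcon : hi t < lo t' := hefmono _ _ (hkey t t' hlt) (hfirstK t')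
        omega
    obtain ⟨t₀, ht₀⟩ := hfree (fun t z =>
        (∃ r, r < 2 * n ∧ z ∈ (w (2 * n * t.val + r)).2.2.support) ∨
          z ∈ (Eseg t).support) (by
      intro t t' z hne h h'
      have hvne : t.val ≠ t'.val := fun hc => hne (Fin.ext hc)
      rcases lt_or_gt_of_ne hvne with h1 | h1
      · exact hTerr t t' h1 z h h'
      · exact hTerr t' t h1 z h' h)
    -- build the combo walk
    have hc1le : T i₀ ≤ ft (iR t₀ i₀) := by have := hftR t₀ i₀; omega
    set c1 : Γ.Walk ((R i₀).f (T i₀)) ((R i₀).f (ft (iR t₀ i₀))) :=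
      raySeg (R i₀) _ _ hc1le with hc1def
    set c2 : Γ.Walk ((R i₀).f (ft (iR t₀ i₀))) (ε.f (ef (iR t₀ i₀))) :=
      ((w (iR t₀ i₀)).2.2).copy (heR1 t₀ i₀) (heR2 t₀ i₀) with hc2def
    obtain ⟨c3, hc3sup, hc3edg⟩ := raySeg₂ ε (ef (iR t₀ i₀)) (ef (iS t₀ j₀))
    set c4 : Γ.Walk (ε.f (ef (iS t₀ j₀))) ((S j₀).f (ft (iS t₀ j₀))) :=
      (((w (iS t₀ j₀)).2.2).copy (heS1 t₀ j₀) (heS2 t₀ j₀)).reverse with hc4def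
    have hfootAV : (S j₀).f (ft (iS t₀ j₀)) ∈ AV0 := by
      rw [hAV0def]
      refine Set.mem_union_left _ (Set.mem_union_left _ ?_)
      refine Set.mem_biUnion (Set.mem_Iio.mpr (hiSK t₀ j₀)) ?_
      exact mem_of_eq (heS1 t₀ j₀) (Walk.start_mem_support _)
    have hc5le : ft (iS t₀ j₀) ≤ L j₀ := by
      have := hLb j₀ _ hfootAV; omega
    set c5 : Γ.Walk ((S j₀).f (ft (iS t₀ j₀))) ((S j₀).f (L j₀)) :=
      raySeg (S j₀) _ _ hc5le with hc5def
    set combo : Γ.Walk ((R i₀).f (T i₀)) ((S j₀).f (L j₀)) :=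
      c1.append (c2.append (c3.append (c4.append c5))) with hcombodef
    have hcomboE : ∀ e ∈ combo.edges, e ∈ E := by
      intro e he
      rw [hcombodef] at he
      simp only [Walk.edges_append, List.mem_append] at he
      rw [hEdef]
      simp only [Set.mem_union]
      rcases he with h | h | h | h | h
      · refine Or.inl (Or.inl (Or.inr ?_))
        refine Set.mem_iUnion.mpr ⟨i₀, ?_⟩
        obtain ⟨m, h1, h2, h3⟩ := (raySeg_edges _ _ _).mp h
        exact (raySeg_edges _ _ _).mpr ⟨m, h1, by have := hRTop' t₀ i₀; omega, h3⟩
      · refine Or.inl (Or.inl (Or.inl ?_))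
        refine Set.mem_biUnion (Set.mem_Iio.mpr (hiRK t₀ i₀)) ?_
        rw [hc2def, Walk.edges_copy] at h
        exact h
      · refine Or.inl (Or.inr ?_)
        refine Set.mem_iUnion.mpr ⟨t₀, ?_⟩
        obtain ⟨m, h1, h2, h3⟩ := hc3edg e h
        refine (raySeg_edges _ _ _).mpr ⟨m, ?_, ?_, h3⟩
        · have q1 := heRlo t₀ i₀; have q2 := heSlo t₀ j₀; omega
        · have q1 := heRhi t₀ i₀; have q2 := heShi t₀ j₀; omega
      · refine Or.inl (Or.inl (Or.inl ?_))
        refine Set.mem_biUnion (Set.mem_Iio.mpr (hiSK t₀ j₀)) ?_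
        rw [hc4def, Walk.edges_reverse, List.mem_reverse, Walk.edges_copy] at h
        exact h
      · refine Or.inr ?_
        refine Set.mem_iUnion.mpr ⟨j₀, ?_⟩
        obtain ⟨m, h1, h2, h3⟩ := (raySeg_edges _ _ _).mp h
        exact (raySeg_edges _ _ _).mpr ⟨m, by have := hftS t₀ j₀; omega, h2, h3⟩
    have hcomboY : ∀ z ∈ combo.support, z ∉ (Y : Set β) := by
      intro z hz hzY
      have hzY' : z ∈ Y := hzY
      rw [hcombodef] at hz
      rcases (Walk.mem_support_append_iff _ _).mp hz with h | hz2
      · refine hi₀ z hzY' ?_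
        obtain ⟨m, h1, h2, h3⟩ := (raySeg_support _ _ _).mp h
        exact (raySeg_support _ _ _).mpr ⟨m, h1, by have := hRTop' t₀ i₀; omega, h3⟩
      rcases (Walk.mem_support_append_iff _ _).mp hz2 with h | hz3
      · refine ht₀ z hzY' (Or.inl ⟨i₀.val, by have := i₀.isLt; omega, ?_⟩)
        rw [hc2def, Walk.support_copy] at h
        exact h
      rcases (Walk.mem_support_append_iff _ _).mp hz3 with h | hz4
      · refine ht₀ z hzY' (Or.inr ?_)
        obtain ⟨m, h1, h2, h3⟩ := hc3sup z h
        refine (raySeg_support _ _ _).mpr ⟨m, ?_, ?_, h3⟩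
        · have q1 := heRlo t₀ i₀; have q2 := heSlo t₀ j₀; omega
        · have q1 := heRhi t₀ i₀; have q2 := heShi t₀ j₀; omega
      rcases (Walk.mem_support_append_iff _ _).mp hz4 with h | h
      · refine ht₀ z hzY' (Or.inl ⟨n + j₀.val, by have := j₀.isLt; omega, ?_⟩)
        rw [hc4def, Walk.support_reverse, List.mem_reverse, Walk.support_copy] at h
        have hidx : 2 * n * t₀.val + (n + j₀.val) = iS t₀ j₀ := by
          rw [hiSdef]; dsimp only; omega
        rw [hidx]
        exact h
      · refine hj₀ z hzY' ?_
        obtain ⟨m, h1, h2, h3⟩ := (raySeg_support _ _ _).mp h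
        exact (raySeg_support _ _ _).mpr ⟨m, by have := hftS t₀ j₀; omega, h2, h3⟩
    obtain ⟨z, hzY, hzsup⟩ := hY ⟨i₀, rfl⟩ ⟨j₀, rfl⟩
      (combo.transfer G' (hintoG' combo hcomboE))
    rw [Walk.support_transfer] at hzsup
    exact hcomboY z hzsup hzY
  obtain ⟨sys⟩ := menger G' A B n hG'fin hsep
  -- distinct endpoints, relabelling
  have hsrcne : ∀ t t' : Fin n, t ≠ t' → sys.src t ≠ sys.src t' := by
    intro t t' hne hc
    exact sys.hdisj t t' hne (sys.src t) (Walk.start_mem_support _)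
      (by rw [hc]; exact Walk.start_mem_support _)
  have htgtne : ∀ t t' : Fin n, t ≠ t' → sys.tgt t ≠ sys.tgt t' := by
    intro t t' hne hc
    exact sys.hdisj t t' hne (sys.tgt t) (Walk.end_mem_support _)
      (by rw [hc]; exact Walk.end_mem_support _)
  have hρex : ∀ t, ∃ i, x i = sys.src t := fun t => sys.hsrc t
  choose ρ hρ using hρex
  have hρinj : Function.Injective ρ := by
    intro t t' h
    by_contra hne
    exact hsrcne t t' hne (by rw [← hρ t, ← hρ t', h])
  have hρbij : Function.Bijective ρ := Finite.injective_iff_bijective.mp hρinj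
  set eρ := Equiv.ofBijective ρ hρbij with heρdef
  have hτex : ∀ t, ∃ j, top j = sys.tgt t := fun t => sys.htgt t
  choose τ hτ using hτex
  have hτinj : Function.Injective τ := by
    intro t t' h
    by_contra hne
    exact htgtne t t' hne (by rw [← hτ t, ← hτ t', h])
  set σf : Fin n → Fin n := fun i => τ (eρ.symm i) with hσfdef
  have hσinj : Function.Injective σf := by
    intro i i' h
    have h2 := hτinj h
    exact eρ.symm.injective h2
  have hρs : ∀ i : Fin n, ρ (eρ.symm i) = i := fun i => eρ.apply_symm_apply i
  have hsrceq : ∀ i : Fin n, sys.src (eρ.symm i) = (R i).f (T i) := by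
    intro i
    rw [← hρ (eρ.symm i), hρs i]
  have htgteq : ∀ i : Fin n, sys.tgt (eρ.symm i) = (S (σf i)).f (L (σf i)) := by
    intro i
    rw [← hτ (eρ.symm i)]
  set Q : ∀ i : Fin n, Γ.Walk ((R i).f (T i)) ((S (σf i)).f (L (σf i))) := fun i =>
    ((sys.path (eρ.symm i)).transfer Γ (houtG' _)).copy (hsrceq i) (htgteq i) with hQdef
  have hQsupp' : ∀ (i : Fin n) (z : β),
      z ∈ (Q i).support ↔ z ∈ (sys.path (eρ.symm i)).support := by
    intro i z
    rw [hQdef]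
    dsimp only
    rw [Walk.support_copy, Walk.support_transfer]
  have hQpath : ∀ i, (Q i).IsPath := by
    intro i
    rw [hQdef]
    dsimp only
    rw [Walk.isPath_copy]
    exact (sys.hpath _).transfer _
  -- membership structure of path supports
  have hK1 : ∀ (i : Fin n) (z : β), z ∈ (Q i).support → z = (R i).f (T i) ∨ z ∈ AV := by
    intro i z hz
    rw [hQsupp' i z] at hz
    rcases fromEdgeSet_walk_support (sys.path (eρ.symm i)) z hz with h | ⟨e, heE, hze⟩
    · exact Or.inl (h.trans (hsrceq i))
    · right
      rw [hEdef] at heE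
      rw [hAVdef]
      rcases heE with ((h | h) | h) | h
      · obtain ⟨k, hk, hek⟩ := Set.mem_iUnion₂.mp h
        refine Set.mem_union_left _ ?_
        rw [hAV0def]
        refine Set.mem_union_left _ (Set.mem_union_left _ ?_)
        exact Set.mem_biUnion hk (mem_support_of_mem_edges _ hek hze)
      · obtain ⟨i', hek⟩ := Set.mem_iUnion.mp h
        refine Set.mem_union_left _ ?_
        rw [hAV0def]
        refine Set.mem_union_left _ (Set.mem_union_right _ ?_)
        exact Set.mem_iUnion.mpr ⟨i', mem_support_of_mem_edges _ hek hze⟩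
      · obtain ⟨t, hek⟩ := Set.mem_iUnion.mp h
        refine Set.mem_union_left _ ?_
        rw [hAV0def]
        refine Set.mem_union_right _ ?_
        exact Set.mem_iUnion.mpr ⟨t, mem_support_of_mem_edges _ hek hze⟩
      · obtain ⟨j, hek⟩ := Set.mem_iUnion.mp h
        refine Set.mem_union_right _ ?_
        exact Set.mem_iUnion.mpr ⟨j, mem_support_of_mem_edges _ hek hze⟩
  -- facts about AV
  have hAV0case : ∀ z, z ∈ AV0 →
      (∃ k, k < K ∧ z ∈ (w k).2.2.support) ∨ (∃ i, z ∈ (Rseg i).support) ∨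
        (∃ t : Fin n, z ∈ (Eseg t).support) := by
    intro z hz
    rw [hAV0def] at hz
    rcases hz with (h | h) | h
    · obtain ⟨k, hk, hzk⟩ := Set.mem_iUnion₂.mp h
      exact Or.inl ⟨k, Set.mem_Iio.mp hk, hzk⟩
    · exact Or.inr (Or.inl (Set.mem_iUnion.mp h))
    · exact Or.inr (Or.inr (Set.mem_iUnion.mp h))
  have hAVcase : ∀ z, z ∈ AV →
      z ∈ AV0 ∨ ∃ j, z ∈ (Sseg j).support := by
    intro z hz
    rw [hAVdef] at hz
    rcases hz with h | h
    · exact Or.inl h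
    · exact Or.inr (Set.mem_iUnion.mp h)
  have hEseglarge : ∀ (t : Fin n) (z : β), z ∈ (Eseg t).support → z ∉ W0 := by
    intro t z hz hzW
    obtain ⟨m, h1, h2, h3⟩ := (raySeg_support _ _ _).mp hz
    have hM : M0 < lo t := hw6 _ (hfirstK t) _ (hhit _ (hfirstK t))
    have := hM0 m (by rw [h3]; exact hzW)
    omega
  have hAVhead : ∀ (z : β), z ∈ AV → ∀ (i : Fin n) (m : ℕ), m ≤ T i →
      (R i).f m = z → z = (R i).f (T i) := by
    intro z hz i m hm heq
    have hzW : z ∈ W0 := by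
      rw [hW0def]
      exact Set.mem_union_right _ (heq ▸ hmemHead i m hm)
    rcases hAVcase z hz with h | ⟨j, h⟩
    · rcases hAV0case z h with ⟨k, hk, hzk⟩ | ⟨i', hzk⟩ | ⟨t, hzk⟩
      · exact absurd hzW (hw4 k hk z hzk)
      · obtain ⟨m', h1, h2, h3⟩ := (raySeg_support _ _ _).mp hzk
        by_cases hii : i' = i
        · subst hii
          have : m = m' := (R i').inj (by rw [heq, h3])
          have : m = T i' := by omega
          rw [← heq, this]
        · exact absurd ⟨m', h3⟩ (fun hc => hRdisj i' i hii z hc ⟨m, heq⟩)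
      · exact absurd hzW (hEseglarge t z hzk)
    · obtain ⟨m', h1, h2, h3⟩ := (raySeg_support _ _ _).mp h
      exact absurd hzW (by rw [← h3]; exact hF j m' h1)
  have hAVtail : ∀ (z : β), z ∈ AV → ∀ (j : Fin n) (m : ℕ), L j ≤ m →
      (S j).f m = z → z = (S j).f (L j) := by
    intro z hz j m hm heq
    rcases hAVcase z hz with h | ⟨j', h⟩
    · exfalso
      have := hLb j m (by rw [heq]; exact h)
      omega
    · obtain ⟨m', h1, h2, h3⟩ := (raySeg_support _ _ _).mp h
      by_cases hjj : j' = j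
      · subst hjj
        have hmm : m = m' := (S j').inj (by rw [heq, h3])
        have : m = L j' := by omega
        rw [← heq, this]
      · exact absurd ⟨m', h3⟩ (fun hc => hSdisj j' j hjj z hc ⟨m, heq⟩)
  have hAVX : ∀ (z : β), z ∈ AV → z ∉ X := by
    intro z hz hzX
    have hzW : z ∈ W0 := by rw [hW0def]; exact Set.mem_union_left _ hzX
    rcases hAVcase z hz with h | ⟨j, h⟩
    · rcases hAV0case z h with ⟨k, hk, hzk⟩ | ⟨i', hzk⟩ | ⟨t, hzk⟩
      · exact hw4 k hk z hzk hzW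
      · obtain ⟨m', h1, h2, h3⟩ := (raySeg_support _ _ _).mp hzk
        exact hT i' m' h1 (by rw [h3]; exact hzX)
      · exact hEseglarge t z hzk hzW
    · obtain ⟨m', h1, h2, h3⟩ := (raySeg_support _ _ _).mp h
      exact hF j m' h1 (by rw [h3]; exact hzW)
  -- path-vs-path disjointness
  have fPP : ∀ (a b : Fin n), a ≠ b → ∀ u, u ∈ (Q a).support → u ∈ (Q b).support → False := by
    intro a b hne u hu hub
    rw [hQsupp'] at hu hub
    exact sys.hdisj _ _ (fun hc => hne (eρ.symm.injective hc)) u hu hub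
  have hxmem : ∀ i : Fin n, (R i).f (T i) ∈ (Q i).support := fun i =>
    Walk.start_mem_support _
  have htopmem : ∀ i : Fin n, (S (σf i)).f (L (σf i)) ∈ (Q i).support := fun i =>
    Walk.end_mem_support _
  -- assemble the linkage
  refine ⟨Linkage.mk ⟨σf, hσinj⟩ T (fun i => L (σf i)) Q hQpath, ⟨?_, ?_, ?_, ?_⟩, ?_⟩
  · -- cond1
    rintro i z hz ⟨m, hm, hzm⟩
    rcases hK1 i z hz with h | h
    · exact h
    · exact hAVhead z h i m hm hzm
  · -- cond2
    rintro i z hz ⟨m, hm, hzm⟩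
    rcases hK1 i z hz with h | h
    · exfalso
      have h1 : (S (σf i)).f m ∉ W0 := hF _ m (le_trans (hLF _) hm)
      apply h1
      rw [hW0def]
      refine Set.mem_union_right _ ?_
      have hzm' : (S (σf i)).f m = z := hzm
      rw [hzm', h]
      exact hxHead i
    · exact hAVtail z h (σf i) m hm hzm
  · -- cond3
    intro i m hm m' hm' hc
    have h1 : (S (σf i)).f m' ∉ W0 := hF _ m' (le_trans (hLF _) hm')
    apply h1
    rw [hW0def]
    refine Set.mem_union_right _ ?_
    have hc' : (R i).f m = (S (σf i)).f m' := hc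
    rw [← hc']
    exact hmemHead i m hm
  · -- cond4: routes disjoint
    intro i i' hne
    rw [Set.disjoint_left]
    intro z hz hz'
    simp only [Linkage.route, Set.mem_union, Set.mem_setOf_eq] at hz hz'
    have hHdP : ∀ (a b : Fin n), a ≠ b → (∃ m ≤ T a, (R a).f m = z) →
        z ∈ (Q b).support → False := by
      rintro a b hab ⟨m, hm, hzm⟩ hzb
      rcases hK1 b z hzb with h | h
      · exact hRdisj a b hab z ⟨m, hzm⟩ ⟨T b, h.symm⟩
      · have hza : z = (R a).f (T a) := hAVhead z h a m hm hzm
        exact fPP a b hab z (by rw [hza]; exact hxmem a) hzb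
    have hPT : ∀ (a b : Fin n), a ≠ b → z ∈ (Q a).support →
        (∃ m, L (σf b) ≤ m ∧ (S (σf b)).f m = z) → False := by
      rintro a b hab hza ⟨m, hm, hzm⟩
      rcases hK1 a z hza with h | h
      · have h1 : (S (σf b)).f m ∉ W0 := hF _ m (le_trans (hLF _) hm)
        apply h1
        rw [hW0def]
        refine Set.mem_union_right _ ?_
        rw [hzm, h]
        exact hxHead a
      · have hzt : z = (S (σf b)).f (L (σf b)) := hAVtail z h (σf b) m hm hzm
        exact fPP b a hab.symm z (by rw [hzt]; exact htopmem b) hza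
    have hHdT : ∀ (a b : Fin n), (∃ m ≤ T a, (R a).f m = z) →
        (∃ m, L (σf b) ≤ m ∧ (S (σf b)).f m = z) → False := by
      rintro a b ⟨m, hm, hzm⟩ ⟨m', hm', hzm'⟩
      have h1 : (S (σf b)).f m' ∉ W0 := hF _ m' (le_trans (hLF _) hm')
      apply h1
      rw [hW0def]
      refine Set.mem_union_right _ ?_
      rw [hzm']
      rw [← hzm]
      exact hmemHead a m hm
    rcases hz with (h1 | h1) | h1 <;> rcases hz' with (h2 | h2) | h2
    · obtain ⟨m, hm, hzm⟩ := h1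
      obtain ⟨m', hm', hzm'⟩ := h2
      exact hRdisj i i' hne z ⟨m, hzm⟩ ⟨m', hzm'⟩
    · exact hHdP i i' hne h1 h2
    · exact hHdT i i' h1 h2
    · exact hHdP i' i (Ne.symm hne) h2 h1
    · exact fPP i i' hne z h1 h2
    · exact hPT i i' hne h1 h2
    · exact hHdT i' i h2 h1
    · exact hPT i' i (Ne.symm hne) h2 h1
    · obtain ⟨m, hm, hzm⟩ := h1
      obtain ⟨m', hm', hzm'⟩ := h2
      refine hSdisj (σf i) (σf i') (fun hc => hne (hσinj hc)) z ⟨m, hzm⟩ ⟨m', hzm'⟩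
  · -- After X
    intro i
    refine ⟨⟨T i, rfl, fun m hm => hT i m hm⟩, ?_, ?_⟩
    · intro z hz hzX
      rcases hK1 i z hz with h | h
      · rw [h] at hzX
        exact hT i (T i) le_rfl hzX
      · exact hAVX z h hzX
    · intro m hm hzX
      refine hF (σf i) m (le_trans (hLF _) hm) ?_
      rw [hW0def]
      exact Set.mem_union_left _ hzX

/-- **Weak linking lemma.** Let `Γ` be a graph and `ε` an end of `Γ` (represented by a
ray). For any families `R = (R_i : i ∈ [n])` and `S = (S_j : j ∈ [n])` of pairwise
vertex-disjoint rays belonging to `ε` and any finite vertex set `X`, there is a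
linkage from `R` to `S` after `X`. -/
theorem weak_linking_lemma {β : Type} (Γ : SimpleGraph β) (ε : GRay Γ) (n : ℕ)
    (R S : Fin n → GRay Γ)
    (hRε : ∀ i, RayEquiv Γ (R i) ε) (hSε : ∀ j, RayEquiv Γ (S j) ε)
    (hRdisj : ∀ i j, i ≠ j →
      ∀ x, x ∈ Set.range (R i).f → x ∈ Set.range (R j).f → False)
    (hSdisj : ∀ i j, i ≠ j →
      ∀ x, x ∈ Set.range (S i).f → x ∈ Set.range (S j).f → False)
    (X : Set β) (hX : X.Finite) :
    ∃ L : Linkage Γ R S, L.IsLinkage ∧ L.After X :=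
  weak_linking_lemma' Γ ε n R S hRε hSε hRdisj hSdisj X hX
end

section
/- Let F be a thick G-tribe in Γ and let F' be a thin G-subtribe of F, witnessed by an injection Ψ : F' → F and injections (φ_{F'} : F' ∈ F'). For a layer F ∈ F, if F ∈ Ψ(F') with Ψ⁻¹(F) = {F'_F}, set F̂ = φ_{F'_F}(F'_F), and if F ∉ Ψ(F'), set F̂ = ∅. Then F'' := {F ∖ F̂ : F ∈ F} is a thick flat G-subtribe of F. -/
open SimpleGraph

/-- A `G`-tribe in `Γ`, with membership relation abstracted as the predicate `P`
(`P H` standing for `G ◀ H`): a collection of finite layers of pairwise disjoint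
subgraphs `H` of `Γ` with `G ◀ H`. -/
structure Tribe {β : Type} (Γ : SimpleGraph β) (P : Γ.Subgraph → Prop) where
  layers : Set (Set Γ.Subgraph)
  finite : ∀ F ∈ layers, F.Finite
  prop : ∀ F ∈ layers, ∀ H ∈ F, P H
  disj : ∀ F ∈ layers, ∀ H ∈ F, ∀ H' ∈ F, H ≠ H' → Disjoint H.verts H'.verts

/-- A tribe is thick if it has layers of unbounded size. -/
def Tribe.Thick {β : Type} {Γ : SimpleGraph β} {P : Γ.Subgraph → Prop}
    (𝓕 : Tribe Γ P) : Prop :=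
  ∀ n : ℕ, ∃ F ∈ 𝓕.layers, n ≤ F.ncard

/-- `𝓕'` is a subtribe of `𝓕`. -/
def IsSubtribe {β : Type} {Γ : SimpleGraph β} {P : Γ.Subgraph → Prop}
    (𝓕' 𝓕 : Tribe Γ P) : Prop :=
  ∃ Ψ : ↥𝓕'.layers → ↥𝓕.layers, Function.Injective Ψ ∧
    ∀ L : ↥𝓕'.layers, ∃ φ : ↥L.1 → ↥(Ψ L).1,
      Function.Injective φ ∧ ∀ H : ↥L.1, (H.1 : SimpleGraph.Subgraph Γ).verts ⊆ (φ H).1.verts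

/-- `𝓕'` is a flat subtribe of `𝓕`. -/
def IsFlatSubtribe {β : Type} {Γ : SimpleGraph β} {P : Γ.Subgraph → Prop}
    (𝓕' 𝓕 : Tribe Γ P) : Prop :=
  ∃ Ψ : ↥𝓕'.layers → ↥𝓕.layers, Function.Injective Ψ ∧ ∀ L : ↥𝓕'.layers, L.1 ⊆ (Ψ L).1

/-- Removing a thin subtribe from a thick tribe leaves a thick flat subtribe:
if `𝓕` is a thick `G`-tribe in `Γ` and `𝓕'` a thin subtribe of `𝓕`, witnessed by
`Ψ` and the injections `φ`, and `hatF` assigns to each layer `F` of `𝓕` the set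
`F̂` (the image of `φ` on the unique `Ψ`-preimage of `F`, or `∅` if `F` is not in
the range of `Ψ`), then `𝓕'' = {F \ F̂ : F ∈ 𝓕}` is a thick flat subtribe of `𝓕`. -/
theorem remove_thin_subtribe {β : Type} (Γ : SimpleGraph β) (P : Γ.Subgraph → Prop)
    (𝓕 𝓕' : Tribe Γ P) (hthick : 𝓕.Thick) (hthin : ¬ 𝓕'.Thick)
    (Ψ : ↥𝓕'.layers → ↥𝓕.layers) (hΨ : Function.Injective Ψ)
    (φ : ∀ L : ↥𝓕'.layers, ↥L.1 → ↥(Ψ L).1)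
    (hφinj : ∀ L, Function.Injective (φ L))
    (hφsub : ∀ (L : ↥𝓕'.layers) (H : ↥L.1),
      (H.1 : SimpleGraph.Subgraph Γ).verts ⊆ ((φ L H).1 : SimpleGraph.Subgraph Γ).verts)
    (hatF : ↥𝓕.layers → Set Γ.Subgraph)
    (hhat_mem : ∀ L' : ↥𝓕'.layers,
      hatF (Ψ L') = Set.range (fun H : ↥L'.1 => ((φ L' H).1 : SimpleGraph.Subgraph Γ)))
    (hhat_empty : ∀ L : ↥𝓕.layers, L ∉ Set.range Ψ → hatF L = ∅) :
    ∃ 𝓕'' : Tribe Γ P,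
      𝓕''.layers = {M : Set Γ.Subgraph | ∃ L : ↥𝓕.layers, M = L.1 \ hatF L} ∧
      𝓕''.Thick ∧ IsFlatSubtribe 𝓕'' 𝓕 := by
  -- 𝓕' is thin: get a uniform bound n₀ on layer sizes
  simp only [Tribe.Thick, not_forall] at hthin
  obtain ⟨n₀, hn₀⟩ := hthin
  push_neg at hn₀
  -- key bound on hatF
  have hkey : ∀ L : ↥𝓕.layers, (hatF L).Finite ∧ (hatF L).ncard ≤ n₀ := by
    intro L
    by_cases h : L ∈ Set.range Ψ
    · obtain ⟨L', rfl⟩ := h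
      rw [hhat_mem L']
      have hfin' : (L'.1 : Set Γ.Subgraph).Finite := 𝓕'.finite _ L'.2
      have : Finite ↥L'.1 := hfin'.to_subtype
      refine ⟨Set.finite_range _, ?_⟩
      calc (Set.range fun H : ↥L'.1 => ((φ L' H).1 : Γ.Subgraph)).ncard
          = Nat.card (Set.range fun H : ↥L'.1 => ((φ L' H).1 : Γ.Subgraph)) :=
            (Nat.card_coe_set_eq _).symm
        _ ≤ Nat.card ↥L'.1 := Finite.card_range_le _
        _ = (L'.1 : Set Γ.Subgraph).ncard := Nat.card_coe_set_eq _
        _ ≤ n₀ := le_of_lt (hn₀ L'.1 L'.2)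
    · rw [hhat_empty L h]; simp
  refine ⟨⟨{M : Set Γ.Subgraph | ∃ L : ↥𝓕.layers, M = L.1 \ hatF L}, ?_, ?_, ?_⟩, rfl, ?_, ?_⟩
  · rintro M ⟨L, rfl⟩
    exact (𝓕.finite _ L.2).subset Set.diff_subset
  · rintro M ⟨L, rfl⟩ H hH
    exact 𝓕.prop _ L.2 H hH.1
  · rintro M ⟨L, rfl⟩ H hH H' hH' hne
    exact 𝓕.disj _ L.2 H hH.1 H' hH'.1 hne
  · -- thickness
    intro n
    obtain ⟨F, hF, hcard⟩ := hthick (n + n₀)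
    refine ⟨F \ hatF ⟨F, hF⟩, ⟨⟨F, hF⟩, rfl⟩, ?_⟩
    obtain ⟨hhfin, hhcard⟩ := hkey ⟨F, hF⟩
    have hFfin : F.Finite := 𝓕.finite F hF
    have h1 : F.ncard ≤ (F \ hatF ⟨F, hF⟩).ncard + (hatF ⟨F, hF⟩).ncard := by
      calc F.ncard ≤ ((F \ hatF ⟨F, hF⟩) ∪ hatF ⟨F, hF⟩).ncard :=
            Set.ncard_le_ncard (fun x hx => by
              by_cases hx' : x ∈ hatF ⟨F, hF⟩
              · exact Or.inr hx'
              · exact Or.inl ⟨hx, hx'⟩) ((hFfin.subset Set.diff_subset).union hhfin)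
        _ ≤ _ := Set.ncard_union_le _ _
    omega
  · -- flat subtribe
    refine ⟨fun M => M.2.choose, ?_, ?_⟩
    · intro M₁ M₂ h
      have h₁ := M₁.2.choose_spec
      have h₂ := M₂.2.choose_spec
      have h' : M₁.2.choose = M₂.2.choose := h
      apply Subtype.ext
      rw [h₁, h₂, h']
    · intro M
      have h₁ := M.2.choose_spec
      intro x hx
      rw [h₁] at hx
      exact hx.1
end

section
/- Let G be a connected graph (of arbitrary cardinality), (◁,◀) a compatible pair of relations between graphs, and Γ a graph containing a thick connected G-tribe F with respect to (◁,◀). Then either ℵ₀G ◁ Γ, or there is a thick flat G-subtribe F' of F and an end ε of Γ such that F' is concentrated at ε. -/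
open SimpleGraph

/-- The disjoint union of `ι` many copies of `G`. -/
def Copies (ι : Type) {α : Type} (G : SimpleGraph α) : SimpleGraph (ι × α) where
  Adj a b := a.1 = b.1 ∧ G.Adj a.2 b.2
  symm := by constructor; rintro a b ⟨h1, h2⟩; exact ⟨h1.symm, h2.symm⟩
  loopless := by constructor; rintro a ⟨-, h⟩; exact G.irrefl h

/-- The tribe `𝓕` is concentrated at the end represented by `ε`: for every finite
vertex set `X`, the subtribe of members not contained in `C(X, ε)` is thin,
i.e. has bounded layers. -/
def ConcentratedAt {β : Type} {Γ : SimpleGraph β} {P : Γ.Subgraph → Prop}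
    (𝓕 : Tribe Γ P) (ε : GRay Γ) : Prop :=
  ∀ X : Set β, X.Finite →
    ∃ k : ℕ, ∀ F ∈ 𝓕.layers,
      ({H ∈ F | ¬ H.verts ⊆ EndComp Γ ε X} : Set Γ.Subgraph).ncard ≤ k

namespace TTC


variable {β : Type} {Γ : SimpleGraph β}

/-- Reachability avoiding a vertex set `X`. -/
def Reach (Γ : SimpleGraph β) (X : Set β) (u v : β) : Prop :=
  u ∉ X ∧ v ∉ X ∧ ∃ p : Γ.Walk u v, ∀ z ∈ p.support, z ∉ X

lemma Reach.refl {X : Set β} {u : β} (hu : u ∉ X) : Reach Γ X u u :=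
  ⟨hu, hu, Walk.nil, by simp [hu]⟩

lemma Reach.symm {X : Set β} {u v : β} (h : Reach Γ X u v) : Reach Γ X v u := by
  obtain ⟨hu, hv, p, hp⟩ := h
  exact ⟨hv, hu, p.reverse, by simpa using hp⟩

lemma Reach.trans {X : Set β} {u v w : β} (h : Reach Γ X u v) (h' : Reach Γ X v w) :
    Reach Γ X u w := by
  obtain ⟨hu, hv, p, hp⟩ := h
  obtain ⟨-, hw, q, hq⟩ := h'
  refine ⟨hu, hw, p.append q, ?_⟩
  intro z hz
  rw [Walk.mem_support_append_iff] at hz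
  rcases hz with hz | hz
  · exact hp z hz
  · exact hq z hz

/-- The reachability class of a vertex. -/
def reachSet (Γ : SimpleGraph β) (X : Set β) (w : β) : Set β := {v | Reach Γ X w v}

lemma reachSet_disjoint_or_eq {X : Set β} {w w' : β} :
    reachSet Γ X w = reachSet Γ X w' ∨ Disjoint (reachSet Γ X w) (reachSet Γ X w') := by
  by_cases h : Disjoint (reachSet Γ X w) (reachSet Γ X w')
  · exact Or.inr h
  · left
    rw [Set.not_disjoint_iff] at h
    obtain ⟨z, hz, hz'⟩ := h
    ext v
    constructor
    · intro hv
      exact Set.mem_setOf.2 ((hz'.trans hz.symm).trans hv)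
    · intro hv
      exact Set.mem_setOf.2 ((hz.trans hz'.symm).trans hv)

lemma reachSet_not_mem_X {X : Set β} {w v : β} (h : v ∈ reachSet Γ X w) : v ∉ X := h.2.1

lemma mem_reachSet_self {X : Set β} {w v : β} (h : v ∈ reachSet Γ X w) : w ∈ reachSet Γ X w :=
  Set.mem_setOf.2 (h.trans h.symm)

/-- Counting: in a pairwise-disjoint family, at most `|X|` sets can meet `X`. -/
lemma ncard_meets_le {F : Set Γ.Subgraph} (hfin : F.Finite)
    (hdisj : ∀ H ∈ F, ∀ H' ∈ F, H ≠ H' → Disjoint H.verts H'.verts)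
    {X : Set β} (hX : X.Finite) {A : Set Γ.Subgraph} (hA : A ⊆ F)
    (hmeet : ∀ H ∈ A, (H.verts ∩ X).Nonempty) : A.ncard ≤ X.ncard := by
  classical
  rcases A.eq_empty_or_nonempty with rfl | ⟨H₀, hH₀⟩
  · simp
  have : Nonempty β := ⟨(hmeet H₀ hH₀).choose⟩
  set f : Γ.Subgraph → β := fun H =>
    if h : (H.verts ∩ X).Nonempty then h.choose else Classical.arbitrary β with hf
  have hfmem : ∀ H ∈ A, f H ∈ H.verts ∩ X := by
    intro H hH
    have h := hmeet H hH
    simp only [hf, dif_pos h]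
    exact h.choose_spec
  have hinj : Set.InjOn f A := by
    intro H hH H' hH' hEq
    by_contra hne
    have h1 := hfmem H hH
    have h2 := hfmem H' hH'
    exact (hdisj H (hA hH) H' (hA hH') hne).ne_of_mem h1.1 h2.1 hEq
  calc A.ncard = (f '' A).ncard := (Set.ncard_image_of_injOn hinj).symm
    _ ≤ X.ncard := by
        apply Set.ncard_le_ncard _ hX
        rintro x ⟨H, hH, rfl⟩
        exact (hfmem H hH).2


variable {P : Γ.Subgraph → Prop}


def IsMember (𝓕 : Tribe Γ P) (H : Γ.Subgraph) : Prop := ∃ F ∈ 𝓕.layers, H ∈ F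

def Thin (𝓕 : Tribe Γ P) (A : Set Γ.Subgraph) : Prop :=
  ∃ k, ∀ F ∈ 𝓕.layers, (A ∩ F).ncard ≤ k

lemma Thin.mono {𝓕 : Tribe Γ P} {A B : Set Γ.Subgraph} (h : Thin 𝓕 B) (hAB : A ⊆ B) :
    Thin 𝓕 A := by
  obtain ⟨k, hk⟩ := h
  refine ⟨k, fun F hF => le_trans (Set.ncard_le_ncard ?_ ?_) (hk F hF)⟩
  · exact Set.inter_subset_inter_left _ hAB
  · exact (𝓕.finite F hF).subset Set.inter_subset_right

lemma Thin.union {𝓕 : Tribe Γ P} {A B : Set Γ.Subgraph} (h : Thin 𝓕 A) (h' : Thin 𝓕 B) :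
    Thin 𝓕 (A ∪ B) := by
  obtain ⟨k, hk⟩ := h
  obtain ⟨k', hk'⟩ := h'
  refine ⟨k + k', fun F hF => ?_⟩
  rw [Set.union_inter_distrib_right]
  exact le_trans (Set.ncard_union_le _ _) (Nat.add_le_add (hk F hF) (hk' F hF))

lemma thin_nonmember (𝓕 : Tribe Γ P) : Thin 𝓕 {H | ¬ IsMember 𝓕 H} := by
  refine ⟨0, fun F hF => ?_⟩
  have : {H | ¬ IsMember 𝓕 H} ∩ F = ∅ := by
    ext H
    simp only [Set.mem_inter_iff, Set.mem_setOf_eq, Set.mem_empty_iff_false, iff_false, not_and]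
    intro hnm hH
    exact hnm ⟨F, hF, hH⟩
  simp [this]

lemma not_thin_univ {𝓕 : Tribe Γ P} (hthick : 𝓕.Thick) : ¬ Thin 𝓕 Set.univ := by
  rintro ⟨k, hk⟩
  obtain ⟨F, hF, hkF⟩ := hthick (k + 1)
  have := hk F hF
  rw [Set.univ_inter] at this
  omega

/-- The filter of co-thin sets. -/
def cothin (𝓕 : Tribe Γ P) (hthick : 𝓕.Thick) : Filter Γ.Subgraph where
  sets := {A | Thin 𝓕 Aᶜ}
  univ_sets := by
    simp only [Set.mem_setOf_eq, Set.compl_univ]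
    exact ⟨0, fun F hF => by simp⟩
  sets_of_superset := by
    intro A B hA hAB
    exact Thin.mono hA (Set.compl_subset_compl.2 hAB)
  inter_sets := by
    intro A B hA hB
    simp only [Set.mem_setOf_eq, Set.compl_inter]
    exact Thin.union hA hB

lemma cothin_neBot {𝓕 : Tribe Γ P} (hthick : 𝓕.Thick) : (cothin 𝓕 hthick).NeBot := by
  refine Filter.neBot_iff.2 fun h => ?_
  have : Thin 𝓕 (∅ : Set Γ.Subgraph)ᶜ := by
    rw [← Filter.empty_mem_iff_bot] at h
    exact h
  rw [Set.compl_empty] at this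
  exact not_thin_univ hthick this


section Members

variable {𝓕 : Tribe Γ P}

lemma member_nonempty (hconn' : ∀ H, IsMember 𝓕 H → (H : Γ.Subgraph).coe.Connected)
    {H : Γ.Subgraph} (hm : IsMember 𝓕 H) : H.verts.Nonempty := by
  have := (hconn' H hm).nonempty
  exact Set.nonempty_coe_sort.mp this

lemma member_reach (hconn' : ∀ H, IsMember 𝓕 H → (H : Γ.Subgraph).coe.Connected)
    {H : Γ.Subgraph} (hm : IsMember 𝓕 H) {X : Set β} (hX : H.verts ∩ X = ∅)
    {a b : β} (ha : a ∈ H.verts) (hb : b ∈ H.verts) : Reach Γ X a b := by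
  have hnotin : ∀ z ∈ H.verts, z ∉ X := by
    intro z hz hzX
    exact Set.eq_empty_iff_forall_notMem.1 hX z ⟨hz, hzX⟩
  refine ⟨hnotin a ha, hnotin b hb, ?_⟩
  have hr := (hconn' H hm).preconnected ⟨a, ha⟩ ⟨b, hb⟩
  obtain ⟨p⟩ := hr
  refine ⟨p.map H.hom, ?_⟩
  intro z hz
  replace hz : z ∈ (p.map H.hom).support := hz
  rw [Walk.support_map] at hz
  obtain ⟨y, hy, rfl⟩ := List.mem_map.1 hz
  exact hnotin _ y.2

lemma member_subset_class (hconn' : ∀ H, IsMember 𝓕 H → (H : Γ.Subgraph).coe.Connected)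
    {H : Γ.Subgraph} (hm : IsMember 𝓕 H) {X : Set β} (hX : H.verts ∩ X = ∅)
    {v : β} (hv : v ∈ H.verts) : H.verts ⊆ reachSet Γ X v := by
  intro z hz
  exact member_reach hconn' hm hX hv hz

lemma class_absorb (hconn' : ∀ H, IsMember 𝓕 H → (H : Γ.Subgraph).coe.Connected)
    {H : Γ.Subgraph} (hm : IsMember 𝓕 H) {X : Set β} (hX : H.verts ∩ X = ∅)
    {w z : β} (hz : z ∈ H.verts) (hzw : z ∈ reachSet Γ X w) :
    H.verts ⊆ reachSet Γ X w := by
  intro y hy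
  exact Set.mem_setOf.2 (Reach.trans hzw (member_reach hconn' hm hX hz hy))

/-- In the absence of an infinite pairwise disjoint family of members, the members
avoiding a finite set `X` live in finitely many reachability classes. -/
lemma finitely_many_classes
    (hconn' : ∀ H, IsMember 𝓕 H → (H : Γ.Subgraph).coe.Connected)
    (hnoseq : ¬ ∃ g : ℕ → Γ.Subgraph, (∀ i, IsMember 𝓕 (g i)) ∧
      ∀ i j, i ≠ j → Disjoint (g i).verts (g j).verts)
    (X : Set β) :
    ∃ s : Finset β, ∀ H, IsMember 𝓕 H → H.verts ∩ X = ∅ →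
      ∃ w ∈ s, H.verts ⊆ reachSet Γ X w := by
  classical
  by_contra hcon
  push_neg at hcon
  -- a choice of a bad member for each finite vertex set
  have hpick : ∀ s : Finset β, ∃ H, IsMember 𝓕 H ∧ H.verts ∩ X = ∅ ∧
      ∀ w ∈ s, ¬ H.verts ⊆ reachSet Γ X w := by
    intro s
    obtain ⟨H, h1, h2, h3⟩ := hcon s
    exact ⟨H, h1, h2, h3⟩
  choose ch hch1 hch2 hch3 using hpick
  by_cases hβ : Nonempty β
  · -- vertex picker
    set pk : Γ.Subgraph → β := fun H =>
      if h : H.verts.Nonempty then h.choose else Classical.arbitrary β with hpk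
    have hpkmem : ∀ H : Γ.Subgraph, H.verts.Nonempty → pk H ∈ H.verts := by
      intro H h
      simp only [hpk, dif_pos h]
      exact h.choose_spec
    -- growing vertex sets
    set stF : ℕ → Finset β := fun n => Nat.rec ∅ (fun _ s => s ∪ {pk (ch s)}) n with hstF
    have hstF0 : stF 0 = ∅ := rfl
    have hstFs : ∀ n, stF (n + 1) = stF n ∪ {pk (ch (stF n))} := fun n => rfl
    have hmono : ∀ {m n}, m ≤ n → stF m ⊆ stF n := by
      intro m n hmn
      induction n with
      | zero => simp_all
      | succ n ih =>
        rcases Nat.lt_or_ge m (n+1) with h | h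
        · rw [hstFs n]
          exact (ih (Nat.lt_succ_iff.1 h)).trans Finset.subset_union_left
        · have : m = n + 1 := le_antisymm hmn h
          subst this
          exact subset_rfl
    set g : ℕ → Γ.Subgraph := fun n => ch (stF n) with hg
    refine hnoseq ⟨g, fun i => hch1 _, ?_⟩
    have key : ∀ i j, i < j → Disjoint (g i).verts (g j).verts := by
      intro i j hij
      have hpkin : pk (g i) ∈ stF (i+1) := by
        rw [hstFs i]
        exact Finset.mem_union_right _ (Finset.mem_singleton_self _)
      have hpkin' : pk (g i) ∈ stF j := hmono (Nat.succ_le_of_lt hij) hpkin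
      have hne : (g i).verts.Nonempty := member_nonempty hconn' (hch1 _)
      have hpkv : pk (g i) ∈ (g i).verts := hpkmem _ hne
      -- g i's verts are inside the class of pk (g i)
      have hsub : (g i).verts ⊆ reachSet Γ X (pk (g i)) :=
        member_subset_class hconn' (hch1 _) (hch2 _) hpkv
      -- g j is not inside that class
      have hnot : ¬ (g j).verts ⊆ reachSet Γ X (pk (g i)) := hch3 (stF j) _ hpkin'
      rw [Set.disjoint_right]
      intro z hzj hzi
      exact hnot (class_absorb hconn' (hch1 _) (hch2 _) hzj (hsub hzi))
    intro i j hij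
    rcases Nat.lt_or_ge i j with h | h
    · exact key i j h
    · exact (key j i (lt_of_le_of_ne h (Ne.symm hij))).symm
  · -- β empty: members have empty (hence nonempty-contradiction) verts
    obtain ⟨H, h1, -, -⟩ := hcon ∅
    obtain ⟨v, -⟩ := member_nonempty hconn' h1
    exact hβ ⟨v⟩

end Members


section Ultra

variable {𝓕 : Tribe Γ P} {U : Ultrafilter Γ.Subgraph}

lemma mem_U_of_thin_compl (hU : ∀ A : Set Γ.Subgraph, Thin 𝓕 A → A ∉ U)
    {A : Set Γ.Subgraph} (h : Thin 𝓕 Aᶜ) : A ∈ U := by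
  by_contra hA
  exact hU Aᶜ h (Ultrafilter.compl_mem_iff_notMem.2 hA)

lemma not_thin_of_mem_U (hU : ∀ A : Set Γ.Subgraph, Thin 𝓕 A → A ∉ U)
    {A : Set Γ.Subgraph} (h : A ∈ U) : ¬ Thin 𝓕 A := fun ht => hU A ht h

lemma thin_meets (𝓕 : Tribe Γ P) {X : Set β} (hX : X.Finite) :
    Thin 𝓕 {H | IsMember 𝓕 H ∧ (H.verts ∩ X).Nonempty} := by
  refine ⟨X.ncard, fun F hF => ?_⟩
  refine ncard_meets_le (𝓕.finite F hF) (𝓕.disj F hF) hX Set.inter_subset_right ?_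
  rintro H ⟨⟨-, h⟩, -⟩
  exact h

lemma avoidSet_mem (hU : ∀ A : Set Γ.Subgraph, Thin 𝓕 A → A ∉ U)
    {X : Set β} (hX : X.Finite) :
    {H | IsMember 𝓕 H ∧ H.verts ∩ X = ∅} ∈ U := by
  apply mem_U_of_thin_compl hU
  refine Thin.mono ((thin_nonmember 𝓕).union (thin_meets 𝓕 hX)) ?_
  intro H hH
  simp only [Set.mem_compl_iff, Set.mem_setOf_eq, not_and] at hH
  by_cases hm : IsMember 𝓕 H
  · right
    refine ⟨hm, ?_⟩
    rw [Set.nonempty_iff_ne_empty]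
    exact hH hm
  · exact Or.inl hm

/-- Existence of the `U`-big reachability class for every finite `X`. -/
lemma cU_exists (hconn' : ∀ H, IsMember 𝓕 H → (H : Γ.Subgraph).coe.Connected)
    (hnoseq : ¬ ∃ g : ℕ → Γ.Subgraph, (∀ i, IsMember 𝓕 (g i)) ∧
      ∀ i j, i ≠ j → Disjoint (g i).verts (g j).verts)
    (hU : ∀ A : Set Γ.Subgraph, Thin 𝓕 A → A ∉ U)
    {X : Set β} (hX : X.Finite) :
    ∃ w : β, {H | IsMember 𝓕 H ∧ H.verts ∩ X = ∅ ∧ H.verts ⊆ reachSet Γ X w} ∈ U := by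
  obtain ⟨s, hs⟩ := finitely_many_classes hconn' hnoseq X
  have hbig : (⋃ w ∈ (s : Set β),
      {H | IsMember 𝓕 H ∧ H.verts ∩ X = ∅ ∧ H.verts ⊆ reachSet Γ X w}) ∈ U := by
    refine Filter.mem_of_superset (avoidSet_mem hU hX) ?_
    rintro H ⟨h1, h2⟩
    obtain ⟨w, hw, hsub⟩ := hs H h1 h2
    exact Set.mem_biUnion hw ⟨h1, h2, hsub⟩
  rw [Ultrafilter.finite_biUnion_mem_iff s.finite_toSet] at hbig
  obtain ⟨w, -, hw⟩ := hbig
  exact ⟨w, hw⟩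

end Ultra

section Goods

variable {𝓕 : Tribe Γ P} {U : Ultrafilter Γ.Subgraph}

/-- A member is good (w.r.t. a choice `cU` of big classes) if it always follows `cU`. -/
def Good (𝓕 : Tribe Γ P) (cU : Set β → Set β) (H : Γ.Subgraph) : Prop :=
  IsMember 𝓕 H ∧ ∀ X : Set β, X.Finite → H.verts ∩ X = ∅ → H.verts ⊆ cU X

/-- A witness of badness. -/
noncomputable def witFn (cU : Set β → Set β) (H : Γ.Subgraph) : Set β :=
  open Classical in
  if h : ∃ X : Set β, X.Finite ∧ H.verts ∩ X = ∅ ∧ ¬ H.verts ⊆ cU X then h.choose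
  else ∅

lemma witFn_spec {cU : Set β → Set β} {H : Γ.Subgraph}
    (hm : IsMember 𝓕 H) (hng : ¬ Good 𝓕 cU H) :
    (witFn cU H).Finite ∧ H.verts ∩ witFn cU H = ∅ ∧ ¬ H.verts ⊆ cU (witFn cU H) := by
  classical
  have h : ∃ X : Set β, X.Finite ∧ H.verts ∩ X = ∅ ∧ ¬ H.verts ⊆ cU X := by
    by_contra hcon
    push_neg at hcon
    exact hng ⟨hm, fun X hX h2 => hcon X hX h2⟩
  rw [witFn, dif_pos h]
  exact h.choose_spec

/-- Pick a bad member subordinate to a list of previous witnesses. -/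
noncomputable def pickBFn (𝓕 : Tribe Γ P) (cU : Set β → Set β) (L : List (Set β)) : Γ.Subgraph :=
  open Classical in
  if h : ({H | IsMember 𝓕 H ∧ ¬ Good 𝓕 cU H} ∩
      ⋂ X ∈ L, {H | H.verts ⊆ cU X}).Nonempty then h.choose else ⊥

lemma pickBFn_spec {cU : Set β → Set β} {L : List (Set β)}
    (h : ({H | IsMember 𝓕 H ∧ ¬ Good 𝓕 cU H} ∩
      ⋂ X ∈ L, {H | H.verts ⊆ cU X}).Nonempty) :
    pickBFn 𝓕 cU L ∈ ({H | IsMember 𝓕 H ∧ ¬ Good 𝓕 cU H} ∩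
      ⋂ X ∈ L, {H | H.verts ⊆ cU X}) := by
  classical
  rw [pickBFn, dif_pos h]
  exact h.choose_spec

/-- The list of witnesses accumulated at stage `n`. -/
noncomputable def stFn (𝓕 : Tribe Γ P) (cU : Set β → Set β) : ℕ → List (Set β)
  | 0 => []
  | n + 1 => stFn 𝓕 cU n ++ [witFn cU (pickBFn 𝓕 cU (stFn 𝓕 cU n))]

lemma stFn_mono {cU : Set β → Set β} {m n : ℕ} (hmn : m ≤ n) :
    ∀ X ∈ stFn 𝓕 cU m, X ∈ stFn 𝓕 cU n := by
  induction n with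
  | zero =>
    intro X hX
    rw [Nat.le_zero.1 hmn] at hX
    exact hX
  | succ n ihn =>
    intro X hX
    rcases Nat.lt_or_ge m (n+1) with h | h
    · rw [stFn]
      exact List.mem_append.2 (Or.inl (ihn (Nat.lt_succ_iff.1 h) X hX))
    · have : m = n + 1 := le_antisymm hmn h
      subst this
      exact hX

lemma goodSet_mem
    (hconn' : ∀ H, IsMember 𝓕 H → (H : Γ.Subgraph).coe.Connected)
    (hnoseq : ¬ ∃ g : ℕ → Γ.Subgraph, (∀ i, IsMember 𝓕 (g i)) ∧
      ∀ i j, i ≠ j → Disjoint (g i).verts (g j).verts)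
    (hU : ∀ A : Set Γ.Subgraph, Thin 𝓕 A → A ∉ U)
    (cU : Set β → Set β)
    (hcU : ∀ X : Set β, X.Finite →
      {H | IsMember 𝓕 H ∧ H.verts ∩ X = ∅ ∧ H.verts ⊆ cU X} ∈ U)
    (hcUcl : ∀ X : Set β, X.Finite → ∃ w, cU X = reachSet Γ X w) :
    {H | Good 𝓕 cU H} ∈ U := by
  classical
  by_contra hg
  have hmem : {H | IsMember 𝓕 H} ∈ U :=
    mem_U_of_thin_compl hU (by simpa [Set.compl_setOf] using thin_nonmember 𝓕)
  have hB : {H | IsMember 𝓕 H ∧ ¬ Good 𝓕 cU H} ∈ U := by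
    have heq : {H | IsMember 𝓕 H ∧ ¬ Good 𝓕 cU H} =
        {H | IsMember 𝓕 H} ∩ {H | Good 𝓕 cU H}ᶜ := by
      ext H; simp [Set.mem_inter_iff]
    rw [heq]
    exact Filter.inter_mem hmem (Ultrafilter.compl_mem_iff_notMem.2 hg)
  have hIlem : ∀ L : List (Set β), (∀ X ∈ L, X.Finite) →
      ({H | IsMember 𝓕 H ∧ ¬ Good 𝓕 cU H} ∩ ⋂ X ∈ L, {H | H.verts ⊆ cU X}) ∈ U := by
    intro L hL
    refine Filter.inter_mem hB ?_
    have heq : (⋂ X ∈ L, {H : Γ.Subgraph | H.verts ⊆ cU X}) =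
        ⋂ X ∈ {X | X ∈ L}, {H : Γ.Subgraph | H.verts ⊆ cU X} := by
      simp
    rw [heq]
    refine (Filter.biInter_mem (List.finite_toSet L)).2 ?_
    intro X hX
    exact Filter.mem_of_superset (hcU X (hL X hX)) (fun H hH => hH.2.2)
  set g : ℕ → Γ.Subgraph := fun n => pickBFn 𝓕 cU (stFn 𝓕 cU n) with hgdef
  have hfin : ∀ n, (∀ X ∈ stFn 𝓕 cU n, X.Finite) ∧
      (IsMember 𝓕 (g n) ∧ ¬ Good 𝓕 cU (g n)) ∧
      (∀ X ∈ stFn 𝓕 cU n, (g n).verts ⊆ cU X) := by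
    intro n
    induction n with
    | zero =>
      have h0 : ∀ X ∈ stFn 𝓕 cU 0, X.Finite := by
        intro X hX
        simp [stFn] at hX
      have hne := Ultrafilter.nonempty_of_mem (hIlem (stFn 𝓕 cU 0) h0)
      have hspec := pickBFn_spec hne
      refine ⟨h0, hspec.1, ?_⟩
      intro X hX
      have := hspec.2
      simp only [Set.mem_iInter] at this
      exact this X hX
    | succ n ih =>
      obtain ⟨ih1, ⟨ihm, ihng⟩, ih3⟩ := ih
      have hwfin := witFn_spec ihm ihng
      have h1 : ∀ X ∈ stFn 𝓕 cU (n+1), X.Finite := by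
        rw [stFn]
        intro X hX
        rcases List.mem_append.1 hX with h | h
        · exact ih1 X h
        · rw [List.mem_singleton] at h
          subst h
          exact hwfin.1
      have hne := Ultrafilter.nonempty_of_mem (hIlem (stFn 𝓕 cU (n+1)) h1)
      have hspec := pickBFn_spec hne
      refine ⟨h1, hspec.1, ?_⟩
      intro X hX
      have := hspec.2
      simp only [Set.mem_iInter] at this
      exact this X hX
  have key : ∀ i j, i < j → Disjoint (g i).verts (g j).verts := by
    intro i j hij
    obtain ⟨-, ⟨him, hing⟩, -⟩ := hfin i
    obtain ⟨-, -, hj3⟩ := hfin j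
    have hwi := witFn_spec (cU := cU) him hing
    have hmemst : witFn cU (g i) ∈ stFn 𝓕 cU j := by
      have hstep : witFn cU (g i) ∈ stFn 𝓕 cU (i+1) := by
        rw [stFn]
        exact List.mem_append.2 (Or.inr (List.mem_singleton_self _))
      exact stFn_mono (Nat.succ_le_of_lt hij) _ hstep
    have hjsub : (g j).verts ⊆ cU (witFn cU (g i)) := hj3 _ hmemst
    obtain ⟨w, hw⟩ := hcUcl (witFn cU (g i)) hwi.1
    have hdisj : (g i).verts ∩ cU (witFn cU (g i)) = ∅ := by
      by_contra hne
      obtain ⟨z, hz1, hz2⟩ := Set.nonempty_iff_ne_empty.2 hne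
      refine hwi.2.2 ?_
      rw [hw] at hz2 ⊢
      exact class_absorb hconn' him hwi.2.1 hz1 hz2
    rw [Set.disjoint_right]
    intro z hzj hzi
    exact Set.eq_empty_iff_forall_notMem.1 hdisj z ⟨hzi, hjsub hzj⟩
  refine hnoseq ⟨g, fun i => (hfin i).2.1.1, ?_⟩
  intro i j hij
  rcases Nat.lt_or_ge i j with h | h
  · exact key i j h
  · exact (key j i (lt_of_le_of_ne h (Ne.symm hij))).symm

end Goods


section WalkUtil

lemma getVert_append_le {u v w : β} (p : Γ.Walk u v) (q : Γ.Walk v w) {i : ℕ}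
    (hi : i ≤ p.length) : (p.append q).getVert i = p.getVert i := by
  rw [Walk.getVert_append]
  rcases lt_or_eq_of_le hi with h | h
  · rw [if_pos h]
  · subst h
    rw [if_neg (lt_irrefl _), Nat.sub_self, Walk.getVert_zero, Walk.getVert_length]

lemma getVert_mem_support' {u v : β} (p : Γ.Walk u v) (i : ℕ) :
    p.getVert i ∈ p.support := by
  rw [Walk.mem_support_iff_exists_getVert]
  rcases le_or_gt i p.length with h | h
  · exact ⟨i, rfl, h⟩
  · exact ⟨p.length, by rw [Walk.getVert_length, Walk.getVert_of_length_le p h.le], le_rfl⟩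

lemma path_getVert_inj {u v : β} {p : Γ.Walk u v} (hp : p.IsPath) :
    ∀ {i j : ℕ}, i < j → j ≤ p.length → p.getVert i ≠ p.getVert j := by
  induction p with
  | nil => intro i j hij hj; simp only [Walk.length_nil] at hj; omega
  | @cons a b c h q ih =>
    intro i j hij hj
    match i, j with
    | 0, (j+1) =>
      rw [Walk.getVert_zero, Walk.getVert_cons_succ]
      intro hEq
      have hmem : q.getVert j ∈ q.support := getVert_mem_support' q j
      rw [← hEq] at hmem
      exact ((Walk.cons_isPath_iff h q).1 hp).2 hmem
    | (i+1), (j+1) =>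
      rw [Walk.getVert_cons_succ, Walk.getVert_cons_succ]
      refine ih ((Walk.cons_isPath_iff h q).1 hp).1 (by omega) ?_
      rw [Walk.length_cons] at hj
      omega

lemma isPath_append {u v w : β} {p : Γ.Walk u v} {S : Γ.Walk v w}
    (hp : p.IsPath) (hS : S.IsPath)
    (hdisj : ∀ z ∈ S.support, z ∈ p.support → z = v) : (p.append S).IsPath := by
  rw [Walk.isPath_def, Walk.support_append]
  refine List.Nodup.append hp.support_nodup ?_ ?_
  · have := hS.support_nodup
    rw [Walk.support_eq_cons] at this
    exact this.of_cons
  · intro z hzp hzS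
    have hzS' : z ∈ S.support := List.mem_of_mem_tail hzS
    have hz := hdisj z hzS' hzp
    subst hz
    have := hS.support_nodup
    rw [Walk.support_eq_cons] at this
    exact (List.nodup_cons.1 this).1 hzS

/-- First entry of a path into a set containing its endpoint. -/
lemma firstEntry {q t : β} (W : Γ.Walk q t) (hW : W.IsPath) (𝒰 : Set β) (ht : t ∈ 𝒰) :
    ∃ (q' : β) (S : Γ.Walk q q'), S.IsPath ∧ q' ∈ 𝒰 ∧
      (∀ z ∈ S.support, z ∈ W.support) ∧ (∀ z ∈ S.support, z ∈ 𝒰 → z = q') := by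
  induction W with
  | nil =>
    exact ⟨_, Walk.nil, Walk.IsPath.nil, ht, by simp, by simp⟩
  | @cons a b c h p ih =>
    by_cases ha : a ∈ 𝒰
    · refine ⟨a, Walk.nil, Walk.IsPath.nil, ha, by simp, ?_⟩
      intro z hz _
      simpa using hz
    · obtain ⟨q', S, hS, hq', hsub, hfirst⟩ := ih ((Walk.cons_isPath_iff h p).1 hW).1 ht
      refine ⟨q', Walk.cons h S, ?_, hq', ?_, ?_⟩
      · rw [Walk.cons_isPath_iff]
        refine ⟨hS, fun hmem => ?_⟩
        exact ((Walk.cons_isPath_iff h p).1 hW).2 (hsub a hmem)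
      · intro z hz
        rw [Walk.support_cons] at hz ⊢
        rcases List.mem_cons.1 hz with h' | h'
        · exact List.mem_cons.2 (Or.inl h')
        · exact List.mem_cons.2 (Or.inr (hsub z h'))
      · intro z hz hz𝒰
        rw [Walk.support_cons] at hz
        rcases List.mem_cons.1 hz with h' | h'
        · subst h'
          exact absurd hz𝒰 ha
        · exact hfirst z h' hz𝒰

end WalkUtil


section Chain

/-- The state of the ray construction: a walk from the base vertex plus the set of
used-up vertices. -/
structure BState {β : Type} (Γ : SimpleGraph β) (v₀ : β) where
  q : β
  walk : Γ.Walk v₀ q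
  X : Set β

variable {𝓕 : Tribe Γ P} {U : Ultrafilter Γ.Subgraph} {v₀ : β}

/-- The invariant of the construction. -/
def BInv (𝓕 : Tribe Γ P) (cU : Set β → Set β) (s : BState Γ v₀) : Prop :=
  s.walk.IsPath ∧ (∀ z ∈ s.walk.support, z ≠ s.q → z ∈ s.X) ∧ s.q ∉ s.X ∧
    s.X.Finite ∧ s.q ∈ cU s.X

lemma cU_reach {cU : Set β → Set β}
    (hcUcl : ∀ X : Set β, X.Finite → ∃ w, cU X = reachSet Γ X w)
    {X : Set β} (hX : X.Finite) {a b : β} (ha : a ∈ cU X) (hb : b ∈ cU X) :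
    Reach Γ X a b := by
  obtain ⟨w, hw⟩ := hcUcl X hX
  rw [hw] at ha hb
  exact (Reach.symm ha).trans hb

lemma cU_notin {cU : Set β → Set β}
    (hcUcl : ∀ X : Set β, X.Finite → ∃ w, cU X = reachSet Γ X w)
    {X : Set β} (hX : X.Finite) {a : β} (ha : a ∈ cU X) : a ∉ X := by
  obtain ⟨w, hw⟩ := hcUcl X hX
  rw [hw] at ha
  exact ha.2.1

/-- Processing all the legs through a disjoint family of good members. -/
lemma legs_aux
    (hconn' : ∀ H, IsMember 𝓕 H → (H : Γ.Subgraph).coe.Connected)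
    (cU : Set β → Set β)
    (hcUcl : ∀ X : Set β, X.Finite → ∃ w, cU X = reachSet Γ X w) :
    ∀ (n : ℕ) (𝒢 : Finset Γ.Subgraph) (s : BState Γ v₀), 𝒢.card = n →
    BInv 𝓕 cU s →
    (∀ H ∈ 𝒢, Good 𝓕 cU H ∧ H.verts ∩ s.X = ∅ ∧ s.q ∉ H.verts) →
    (∀ H ∈ 𝒢, ∀ H' ∈ 𝒢, H ≠ H' → Disjoint H.verts H'.verts) →
    ∃ s' : BState Γ v₀, BInv 𝓕 cU s' ∧ s.X ⊆ s'.X ∧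
      (∃ S : Γ.Walk s.q s'.q, s'.walk = s.walk.append S) ∧
      s.walk.length + 𝒢.card ≤ s'.walk.length ∧
      (∀ H ∈ 𝒢, ∃ i, s.walk.length ≤ i ∧ i ≤ s'.walk.length ∧
        s'.walk.getVert i ∈ H.verts) := by
  classical
  intro n
  induction n with
  | zero =>
    intro 𝒢 s hcard hinv hfam hdisj
    rw [Finset.card_eq_zero] at hcard
    subst hcard
    refine ⟨s, hinv, subset_rfl, ⟨Walk.nil, (Walk.append_nil _).symm⟩, by simp, by simp⟩
  | succ n ih =>
    intro 𝒢 s hcard hinv hfam hdisj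
    obtain ⟨hpath, hsupX, hqX, hXfin, hqcU⟩ := hinv
    -- pick a target good
    have hne : 𝒢.Nonempty := Finset.card_pos.1 (by omega)
    obtain ⟨H₀, hH₀⟩ := hne
    obtain ⟨hH₀good, hH₀X, hH₀q⟩ := hfam H₀ hH₀
    obtain ⟨h₀, hh₀⟩ := member_nonempty hconn' hH₀good.1
    have hH₀sub : H₀.verts ⊆ cU s.X := hH₀good.2 s.X hXfin hH₀X
    -- a walk from q to h₀ avoiding X
    obtain ⟨hqn, hhn, W0, hW0⟩ := cU_reach hcUcl hXfin hqcU (hH₀sub hh₀)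
    set Wp := W0.toPath with hWp
    have hWpsub : (Wp : Γ.Walk s.q h₀).support ⊆ W0.support := Walk.support_toPath_subset _
    -- first entry into the union of the family
    set 𝒰 : Set β := {z | ∃ H ∈ 𝒢, z ∈ H.verts} with h𝒰
    have hh₀𝒰 : h₀ ∈ 𝒰 := ⟨H₀, hH₀, hh₀⟩
    obtain ⟨q', S, hSpath, hq'𝒰, hSsub, hSfirst⟩ := firstEntry (Wp : Γ.Walk s.q h₀) Wp.2 𝒰 hh₀𝒰
    have hSavoid : ∀ z ∈ S.support, z ∉ s.X := fun z hz => hW0 z (hWpsub (hSsub z hz))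
    obtain ⟨H', hH'𝒢, hq'H'⟩ := hq'𝒰
    have hq'q : q' ≠ s.q := by
      rintro rfl
      exact (hfam H' hH'𝒢).2.2 hq'H'
    -- the new state
    set X' : Set β := s.X ∪ {z | z ∈ S.support ∧ z ≠ q'} with hX'
    set s' : BState Γ v₀ := ⟨q', s.walk.append S, X'⟩ with hs'
    have hq'X' : q' ∉ X' := by
      rintro (h | h)
      · exact hSavoid q' (Walk.end_mem_support S) h
      · exact h.2 rfl
    have hXX' : s.X ⊆ X' := Set.subset_union_left
    -- the new walk is a path
    have hpath' : (s.walk.append S).IsPath := by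
      refine isPath_append hpath hSpath ?_
      intro z hzS hzp
      by_contra hzq
      exact hSavoid z hzS (hsupX z hzp hzq)
    -- support control
    have hsup' : ∀ z ∈ (s.walk.append S).support, z ≠ q' → z ∈ X' := by
      intro z hz hzq'
      rw [Walk.mem_support_append_iff] at hz
      rcases hz with hz | hz
      · by_cases hzq : z = s.q
        · subst hzq
          exact Or.inr ⟨Walk.start_mem_support S, hzq'⟩
        · exact Or.inl (hsupX z hz hzq)
      · exact Or.inr ⟨hz, hzq'⟩
    have hX'fin : X'.Finite := by
      refine hXfin.union ?_
      exact (S.support.finite_toSet.subset (fun z hz => hz.1))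
    -- H' avoids X'
    have hH'X' : H'.verts ∩ X' = ∅ := by
      rw [Set.eq_empty_iff_forall_notMem]
      rintro z ⟨hzH', hz | hz⟩
      · exact Set.eq_empty_iff_forall_notMem.1 (hfam H' hH'𝒢).2.1 z ⟨hzH', hz⟩
      · exact hz.2 (hSfirst z hz.1 ⟨H', hH'𝒢, hzH'⟩)
    have hq'cU : q' ∈ cU X' := (hfam H' hH'𝒢).1.2 X' hX'fin hH'X' hq'H'
    have hinv' : BInv 𝓕 cU s' := ⟨hpath', hsup', hq'X', hX'fin, hq'cU⟩
    -- set up the recursive call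
    have hcard' : (𝒢.erase H').card = n := by
      rw [Finset.card_erase_of_mem hH'𝒢, hcard]
      rfl
    have hfam' : ∀ H ∈ 𝒢.erase H', Good 𝓕 cU H ∧ H.verts ∩ X' = ∅ ∧ q' ∉ H.verts := by
      intro H hH
      have hH𝒢 := Finset.mem_of_mem_erase hH
      have hHne : H ≠ H' := Finset.ne_of_mem_erase hH
      have hdisjH : Disjoint H.verts H'.verts := hdisj H hH𝒢 H' hH'𝒢 hHne
      refine ⟨(hfam H hH𝒢).1, ?_, fun hq'H => hdisjH.ne_of_mem hq'H hq'H' rfl⟩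
      rw [Set.eq_empty_iff_forall_notMem]
      rintro z ⟨hzH, hz | hz⟩
      · exact Set.eq_empty_iff_forall_notMem.1 (hfam H hH𝒢).2.1 z ⟨hzH, hz⟩
      · have : z = q' := hSfirst z hz.1 ⟨H, hH𝒢, hzH⟩
        subst this
        exact hdisjH.ne_of_mem hzH hq'H' rfl
    have hdisj' : ∀ H ∈ 𝒢.erase H', ∀ H'' ∈ 𝒢.erase H', H ≠ H'' →
        Disjoint H.verts H''.verts := by
      intro H hH H'' hH'' hne'
      exact hdisj H (Finset.mem_of_mem_erase hH) H'' (Finset.mem_of_mem_erase hH'') hne'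
    obtain ⟨s'', hinv'', hXsub'', ⟨S₂, hS₂⟩, hlen'', hanch''⟩ :=
      ih (𝒢.erase H') s' hcard' hinv' hfam' hdisj'
    -- lengths
    have hS1 : 1 ≤ S.length := by
      by_contra hS1
      push_neg at hS1
      interval_cases h : S.length
      · exact hq'q (Walk.eq_of_length_eq_zero h).symm
    have hlen1 : s'.walk.length = s.walk.length + S.length := by
      rw [hs']
      exact Walk.length_append _ _
    have hlen2 : s''.walk.length = s'.walk.length + S₂.length := by
      rw [hS₂]
      exact Walk.length_append _ _
    refine ⟨s'', hinv'', hXX'.trans hXsub'', ⟨S.append S₂, ?_⟩, ?_, ?_⟩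
    · rw [hS₂]
      exact (Walk.append_assoc s.walk S S₂).symm
    · omega
    · intro H hH
      by_cases hHH' : H = H'
      · subst hHH'
        refine ⟨s'.walk.length, by omega, by omega, ?_⟩
        rw [hS₂, getVert_append_le _ _ (le_refl _), Walk.getVert_length]
        exact hq'H'
      · obtain ⟨i, hi1, hi2, hi3⟩ := hanch'' H (Finset.mem_erase.2 ⟨hHH', hH⟩)
        exact ⟨i, by omega, hi2, hi3⟩

end Chain


section Block

variable {𝓕 : Tribe Γ P} {U : Ultrafilter Γ.Subgraph} {v₀ : β}

lemma blockStep
    (hconn' : ∀ H, IsMember 𝓕 H → (H : Γ.Subgraph).coe.Connected)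
    (hU : ∀ A : Set Γ.Subgraph, Thin 𝓕 A → A ∉ U)
    (cU : Set β → Set β)
    (hcUcl : ∀ X : Set β, X.Finite → ∃ w, cU X = reachSet Γ X w)
    (hGood : {H | Good 𝓕 cU H} ∈ U) :
    ∀ (k : ℕ) (s : BState Γ v₀), BInv 𝓕 cU s →
    ∃ s' : BState Γ v₀, BInv 𝓕 cU s' ∧ s.X ⊆ s'.X ∧
      (∃ S : Γ.Walk s.q s'.q, s'.walk = s.walk.append S) ∧
      s.walk.length + k ≤ s'.walk.length ∧
      ∃ 𝒢 : Finset Γ.Subgraph, 𝒢.card = k ∧ (∀ H ∈ 𝒢, Good 𝓕 cU H) ∧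
        (∀ H ∈ 𝒢, ∀ H' ∈ 𝒢, H ≠ H' → Disjoint H.verts H'.verts) ∧
        (∀ H ∈ 𝒢, ∃ i, s.walk.length ≤ i ∧ i ≤ s'.walk.length ∧
          s'.walk.getVert i ∈ H.verts) := by
  classical
  intro k s hinv
  obtain ⟨hpath, hsupX, hqX, hXfin, hqcU⟩ := hinv
  -- the `U`-large family of good members avoiding `X ∪ {q}`
  have hA' : ({H | Good 𝓕 cU H} ∩
      {H | IsMember 𝓕 H ∧ H.verts ∩ (s.X ∪ {s.q}) = ∅}) ∈ U :=
    Filter.inter_mem hGood (avoidSet_mem hU (hXfin.union (Set.finite_singleton _)))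
  have hnt := not_thin_of_mem_U hU hA'
  rw [Thin] at hnt
  push_neg at hnt
  obtain ⟨F, hF, hk⟩ := hnt k
  obtain ⟨T, hT, hTcard⟩ := Set.exists_subset_card_eq hk.le
  have hTF : T ⊆ F := hT.trans Set.inter_subset_right
  have hTfin : T.Finite := ((𝓕.finite F hF).subset hTF)
  set 𝒢 : Finset Γ.Subgraph := hTfin.toFinset with h𝒢
  have h𝒢mem : ∀ {H}, H ∈ 𝒢 ↔ H ∈ T := by
    intro H
    simp [h𝒢, Set.Finite.mem_toFinset]
  have h𝒢card : 𝒢.card = k := by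
    rw [← hTcard, Set.ncard_eq_toFinset_card T hTfin]
  have hfam : ∀ H ∈ 𝒢, Good 𝓕 cU H ∧ H.verts ∩ s.X = ∅ ∧ s.q ∉ H.verts := by
    intro H hH
    have hHT := h𝒢mem.1 hH
    have h2 := hT hHT
    simp only [Set.mem_inter_iff, Set.mem_setOf_eq] at h2
    obtain ⟨⟨hgood, -, havoid⟩, -⟩ := h2
    constructor
    · exact hgood
    constructor
    · rw [Set.eq_empty_iff_forall_notMem]
      rintro z ⟨hz1, hz2⟩
      exact Set.eq_empty_iff_forall_notMem.1 havoid z ⟨hz1, Or.inl hz2⟩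
    · intro hq
      exact Set.eq_empty_iff_forall_notMem.1 havoid s.q ⟨hq, Or.inr rfl⟩
  have hdisj : ∀ H ∈ 𝒢, ∀ H' ∈ 𝒢, H ≠ H' → Disjoint H.verts H'.verts := by
    intro H hH H' hH' hne
    exact 𝓕.disj F hF H (hTF (h𝒢mem.1 hH)) H' (hTF (h𝒢mem.1 hH')) hne
  obtain ⟨s', hinv', hXsub, hext, hlen, hanch⟩ :=
    legs_aux hconn' cU hcUcl 𝒢.card 𝒢 s rfl ⟨hpath, hsupX, hqX, hXfin, hqcU⟩ hfam hdisj
  rw [h𝒢card] at hlen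
  exact ⟨s', hinv', hXsub, hext, hlen, 𝒢, h𝒢card, fun H hH => (hfam H hH).1, hdisj, hanch⟩

end Block


end TTC

/-- Let `G` be a connected graph (of arbitrary cardinality), `(◁, ◀)` a compatible pair
of relations between graphs (`◁` being `⊆ ∘ ◀` by (R1), and `blt` = `◀` satisfying
(R2)), and `Γ` a graph containing a thick connected `G`-tribe `𝓕` with respect to
`(◁, ◀)`. Then either `ℵ₀ G ◁ Γ`, or there are a thick flat subtribe `𝓕'` of `𝓕`
and an end `ε` of `Γ` such that `𝓕'` is concentrated at `ε`. -/

theorem thick_tribe_concentrates {α β : Type}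
    (G : SimpleGraph α) (hG : G.Connected) (Γ : SimpleGraph β)
    (blt : ∀ {γ δ : Type}, SimpleGraph γ → SimpleGraph δ → Prop)
    (hR2 : ∀ {δ : Type} (Δ : SimpleGraph δ) (I : Type) (Hf : I → Δ.Subgraph),
      (∀ i j, i ≠ j → Disjoint (Hf i).verts (Hf j).verts) →
      (∀ i, blt G (Hf i).coe) → blt (Copies I G) (⨆ i, Hf i).coe)
    (𝓕 : Tribe Γ (fun H => blt G H.coe)) (hthick : 𝓕.Thick)
    (hconn : ∀ F ∈ 𝓕.layers, ∀ H ∈ F, (H : SimpleGraph.Subgraph Γ).coe.Connected) :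
    (∃ H : Γ.Subgraph, blt (Copies ℕ G) H.coe) ∨
      ∃ 𝓕' : Tribe Γ (fun H => blt G H.coe), 𝓕'.Thick ∧ IsFlatSubtribe 𝓕' 𝓕 ∧
        ∃ ε : GRay Γ, ConcentratedAt 𝓕' ε := by
  classical
  by_cases hseq : ∃ g : ℕ → Γ.Subgraph, (∀ i, ∃ F ∈ 𝓕.layers, g i ∈ F) ∧
      ∀ i j, i ≠ j → Disjoint (g i).verts (g j).verts
  · -- infinitely many pairwise disjoint members: `ℵ₀ G ◁ Γ`
    left
    obtain ⟨g, hmem, hdis⟩ := hseq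
    refine ⟨⨆ i, g i, hR2 Γ ℕ g hdis ?_⟩
    intro i
    obtain ⟨F, hF, hgF⟩ := hmem i
    exact 𝓕.prop F hF _ hgF
  · right
    have hconn' : ∀ H, TTC.IsMember 𝓕 H → (H : SimpleGraph.Subgraph Γ).coe.Connected := by
      rintro H ⟨F, hF, hH⟩
      exact hconn F hF H hH
    have hnoseq : ¬ ∃ g : ℕ → Γ.Subgraph, (∀ i, TTC.IsMember 𝓕 (g i)) ∧
        ∀ i j, i ≠ j → Disjoint (g i).verts (g j).verts := hseq
    -- an ultrafilter avoiding the thin sets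
    haveI : (TTC.cothin 𝓕 hthick).NeBot := TTC.cothin_neBot hthick
    obtain ⟨U, hUle⟩ := Ultrafilter.exists_le (TTC.cothin 𝓕 hthick)
    have hU : ∀ A : Set Γ.Subgraph, TTC.Thin 𝓕 A → A ∉ U := by
      intro A hA hAU
      have hc : Aᶜ ∈ TTC.cothin 𝓕 hthick := by
        show TTC.Thin 𝓕 Aᶜᶜ
        rwa [compl_compl]
      have hcU' : Aᶜ ∈ U := hUle hc
      have := Ultrafilter.nonempty_of_mem (Filter.inter_mem hAU hcU')
      simp at this
    -- the `U`-big classes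
    have hex : ∀ X : Set β, X.Finite → ∃ w : β,
        {H | TTC.IsMember 𝓕 H ∧ H.verts ∩ X = ∅ ∧ H.verts ⊆ TTC.reachSet Γ X w} ∈ U :=
      fun X hX => TTC.cU_exists hconn' hnoseq hU hX
    choose wX hwX using hex
    set cU : Set β → Set β :=
      fun X => if h : X.Finite then TTC.reachSet Γ X (wX X h) else ∅ with hcUdef
    have hcUeq : ∀ (X : Set β) (hX : X.Finite), cU X = TTC.reachSet Γ X (wX X hX) := by
      intro X hX
      rw [hcUdef]
      exact dif_pos hX
    have hcU : ∀ X : Set β, X.Finite →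
        {H | TTC.IsMember 𝓕 H ∧ H.verts ∩ X = ∅ ∧ H.verts ⊆ cU X} ∈ U := by
      intro X hX
      rw [hcUeq X hX]
      exact hwX X hX
    have hcUcl : ∀ X : Set β, X.Finite → ∃ w, cU X = TTC.reachSet Γ X w :=
      fun X hX => ⟨wX X hX, hcUeq X hX⟩
    have hGood : {H | TTC.Good 𝓕 cU H} ∈ U :=
      TTC.goodSet_mem hconn' hnoseq hU cU hcU hcUcl
    -- the initial state
    obtain ⟨H₀, hH₀⟩ := Ultrafilter.nonempty_of_mem hGood
    obtain ⟨q₀, hq₀⟩ := TTC.member_nonempty hconn' hH₀.1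
    have hinv₀ : TTC.BInv 𝓕 cU (⟨q₀, SimpleGraph.Walk.nil, ∅⟩ : TTC.BState Γ q₀) := by
      refine ⟨SimpleGraph.Walk.IsPath.nil, ?_, by simp, Set.finite_empty, ?_⟩
      · intro z hz hzq
        rw [Walk.support_nil, List.mem_singleton] at hz
        exact absurd hz hzq
      · exact hH₀.2 ∅ Set.finite_empty (by simp) hq₀
    have hstep := TTC.blockStep (v₀ := q₀) hconn' hU cU hcUcl hGood
    -- the chain of states
    set seq : ℕ → {s : TTC.BState Γ q₀ // TTC.BInv 𝓕 cU s} :=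
      fun n => Nat.rec (motive := fun _ => {s : TTC.BState Γ q₀ // TTC.BInv 𝓕 cU s})
        ⟨⟨q₀, SimpleGraph.Walk.nil, ∅⟩, hinv₀⟩
        (fun n p => ⟨(hstep (n+1) p.1 p.2).choose, (hstep (n+1) p.1 p.2).choose_spec.1⟩) n
      with hseqdef
    have hprops : ∀ n, ((seq n).1.X ⊆ (seq (n+1)).1.X) ∧
        (∃ S : Γ.Walk (seq n).1.q (seq (n+1)).1.q,
          (seq (n+1)).1.walk = (seq n).1.walk.append S) ∧
        ((seq n).1.walk.length + (n+1) ≤ (seq (n+1)).1.walk.length) ∧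
        ∃ 𝒢 : Finset Γ.Subgraph, 𝒢.card = n+1 ∧ (∀ H ∈ 𝒢, TTC.Good 𝓕 cU H) ∧
          (∀ H ∈ 𝒢, ∀ H' ∈ 𝒢, H ≠ H' → Disjoint H.verts H'.verts) ∧
          (∀ H ∈ 𝒢, ∃ i, (seq n).1.walk.length ≤ i ∧ i ≤ (seq (n+1)).1.walk.length ∧
            (seq (n+1)).1.walk.getVert i ∈ H.verts) := by
      intro n
      have h := (hstep (n+1) (seq n).1 (seq n).2).choose_spec
      exact ⟨h.2.1, h.2.2.1, h.2.2.2.1, h.2.2.2.2⟩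
    -- length growth
    have hLstep : ∀ n, (seq n).1.walk.length + (n+1) ≤ (seq (n+1)).1.walk.length :=
      fun n => (hprops n).2.2.1
    have hLmono : ∀ m n, m ≤ n → (seq m).1.walk.length ≤ (seq n).1.walk.length := by
      intro m n hmn
      induction n with
      | zero =>
        rw [Nat.le_zero.1 hmn]
      | succ n ihn =>
        rcases Nat.lt_or_ge m (n+1) with h | h
        · have := hLstep n
          have := ihn (Nat.lt_succ_iff.1 h)
          omega
        · rw [le_antisymm hmn h]
    have hLge : ∀ n, n ≤ (seq n).1.walk.length := by
      intro n
      induction n with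
      | zero => exact Nat.zero_le _
      | succ n ihn =>
        have := hLstep n
        omega
    -- stability of `getVert`
    have hstab : ∀ m n i, m ≤ n → i ≤ (seq m).1.walk.length →
        (seq n).1.walk.getVert i = (seq m).1.walk.getVert i := by
      intro m n i hmn hi
      induction n with
      | zero =>
        rw [Nat.le_zero.1 hmn]
      | succ n ihn =>
        rcases Nat.lt_or_ge m (n+1) with h | h
        · have hmn' : m ≤ n := Nat.lt_succ_iff.1 h
          obtain ⟨S, hS⟩ := (hprops n).2.1
          rw [hS, TTC.getVert_append_le _ _ (hi.trans (hLmono m n hmn'))]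
          exact ihn hmn'
        · rw [le_antisymm hmn h]
    -- the ray
    set f : ℕ → β := fun k => (seq (k+1)).1.walk.getVert k with hfdef
    have hfstab : ∀ k n, k + 1 ≤ n → (seq n).1.walk.getVert k = f k := by
      intro k n h
      exact hstab (k+1) n k h ((Nat.le_succ k).trans (hLge (k+1)))
    have hinj : Function.Injective f := by
      intro a b hab
      by_contra hne
      rcases Nat.lt_or_ge a b with h | h
      · have h1 : f a = (seq (b+1)).1.walk.getVert a := (hfstab a (b+1) (by omega)).symm
        have h2 : f b = (seq (b+1)).1.walk.getVert b := rfl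
        rw [h1, h2] at hab
        exact TTC.path_getVert_inj (seq (b+1)).2.1 h ((Nat.le_succ b).trans
          (hLge (b+1))) hab
      · have h' : b < a := lt_of_le_of_ne h (Ne.symm hne)
        have h1 : f b = (seq (a+1)).1.walk.getVert b := (hfstab b (a+1) (by omega)).symm
        have h2 : f a = (seq (a+1)).1.walk.getVert a := rfl
        rw [h1, h2] at hab
        exact TTC.path_getVert_inj (seq (a+1)).2.1 h' ((Nat.le_succ a).trans
          (hLge (a+1))) hab.symm
    have hadj : ∀ k, Γ.Adj (f k) (f (k+1)) := by
      intro k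
      have h1 : f k = (seq (k+2)).1.walk.getVert k := (hfstab k (k+2) (by omega)).symm
      have h2 : f (k+1) = (seq (k+2)).1.walk.getVert (k+1) := rfl
      rw [h1, h2]
      refine Walk.adj_getVert_succ _ ?_
      have := hLge (k+2)
      omega
    set ε : GRay Γ := ⟨f, hinj, hadj⟩ with hεdef
    -- the key alignment property
    have hkey : ∀ X : Set β, X.Finite → cU X ⊆ EndComp Γ ε X := by
      intro X hX
      have hTfin : {k : ℕ | f k ∈ X}.Finite := by
        have := Set.Finite.preimage hinj.injOn hX
        exact this
      obtain ⟨b, hb⟩ := hTfin.bddAbove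
      set n := max (b+1) X.ncard with hn
      obtain ⟨-, -, -, 𝒢, h𝒢card, h𝒢good, h𝒢disj, h𝒢anch⟩ := hprops n
      -- a member of the family avoiding X
      have hexH : ∃ H ∈ 𝒢, H.verts ∩ X = ∅ := by
        by_contra hcon
        push_neg at hcon
        have hcount : (↑𝒢 : Set Γ.Subgraph).ncard ≤ X.ncard := by
          refine TTC.ncard_meets_le (𝒢.finite_toSet) ?_ hX subset_rfl ?_
          · intro H hH H' hH' hne
            exact h𝒢disj H hH H' hH' hne
          · intro H hH
            exact hcon H hH
        rw [Set.ncard_coe_finset, h𝒢card] at hcount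
        omega
      obtain ⟨H, hH𝒢, hHX⟩ := hexH
      obtain ⟨i, hi1, hi2, hianch⟩ := h𝒢anch H hH𝒢
      -- the anchor is a late ray vertex inside `cU X`
      have hfi : f i = (seq (n+1)).1.walk.getVert i := by
        rcases le_total (i+1) (n+1) with h | h
        · exact (hstab (i+1) (n+1) i h ((Nat.le_succ i).trans (hLge (i+1)))).symm
        · exact (hstab (n+1) (i+1) i h hi2)
      have hfiH : f i ∈ H.verts := by
        rw [hfi]
        exact hianch
      have hficU : f i ∈ cU X := (h𝒢good H hH𝒢).2 X hX hHX hfiH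
      have hiN : b + 1 ≤ i := by
        have h1 : n ≤ (seq n).1.walk.length := hLge n
        have h2 : b + 1 ≤ n := le_max_left _ _
        omega
      have hint : InTail ε X (f i) := by
        refine ⟨i, rfl, ?_⟩
        intro m him hmX
        have : m ≤ b := hb hmX
        omega
      intro w hw
      have hwreach : TTC.Reach Γ X w (f i) := TTC.cU_reach hcUcl hX hw hficU
      obtain ⟨hwX, -, p, hp⟩ := hwreach
      exact ⟨hwX, f i, p, hp, hint⟩
    -- the concentrated subtribe
    refine ⟨⟨{S | ∃ F ∈ 𝓕.layers, S = {H ∈ F | TTC.Good 𝓕 cU H}}, ?_, ?_, ?_⟩, ?_, ?_, ε, ?_⟩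
    · -- finiteness of layers
      rintro S ⟨F, hF, rfl⟩
      exact (𝓕.finite F hF).subset (fun H hH => hH.1)
    · -- the members satisfy P
      rintro S ⟨F, hF, rfl⟩ H hH
      exact 𝓕.prop F hF H hH.1
    · -- disjointness within layers
      rintro S ⟨F, hF, rfl⟩ H hH H' hH' hne
      exact 𝓕.disj F hF H hH.1 H' hH'.1 hne
    · -- thickness
      intro n
      have hnt := TTC.not_thin_of_mem_U hU hGood
      rw [TTC.Thin] at hnt
      push_neg at hnt
      obtain ⟨F, hF, hn⟩ := hnt n
      refine ⟨{H ∈ F | TTC.Good 𝓕 cU H}, ⟨F, hF, rfl⟩, ?_⟩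
      have : {H ∈ F | TTC.Good 𝓕 cU H} = {H | TTC.Good 𝓕 cU H} ∩ F := by
        ext H
        constructor
        · rintro ⟨h1, h2⟩
          exact ⟨h2, h1⟩
        · rintro ⟨h1, h2⟩
          exact ⟨h2, h1⟩
      rw [this]
      omega
    · -- flatness
      have hch : ∀ S : {S // S ∈ {S | ∃ F ∈ 𝓕.layers, S = {H ∈ F | TTC.Good 𝓕 cU H}}},
          ∃ F, F ∈ 𝓕.layers ∧ S.1 = {H ∈ F | TTC.Good 𝓕 cU H} := by
        rintro ⟨S, F, hF, rfl⟩
        exact ⟨F, hF, rfl⟩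
      choose Φ hΦ1 hΦ2 using hch
      refine ⟨fun S => ⟨Φ S, hΦ1 S⟩, ?_, ?_⟩
      · intro S S' hSS
        have hfe : Φ S = Φ S' := congrArg Subtype.val hSS
        apply Subtype.ext
        rw [hΦ2 S, hΦ2 S', hfe]
      · intro S
        rw [hΦ2 S]
        intro H hH
        exact hH.1
    · -- concentration at ε
      intro X hX
      refine ⟨X.ncard, ?_⟩
      rintro S ⟨F, hF, rfl⟩
      refine TTC.ncard_meets_le (𝓕.finite F hF) (𝓕.disj F hF) hX ?_ ?_
      · intro H hH
        exact hH.1.1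
      · rintro H ⟨⟨hHF, hHgood⟩, hHbad⟩
        rw [Set.nonempty_iff_ne_empty]
        intro hHX
        exact hHbad ((hHgood.2 X hX hHX).trans (hkey X hX))
end
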